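/- arXiv:1109.3795 — 7 statements merged into one kernel-verified Lean document; each statement's English description precedes it below -/
import Mathlib

section
/- Let s : 𝔻 → ℂ be holomorphic on the open unit disk 𝔻. Then |s(z)| ≤ 1 for all z ∈ 𝔻 if and only if the de Branges–Rovnyak kernel K_s(z,w) := (1 − s(z)·conj(s(w)))/(1 − z·conj(w)) is a positive kernel on 𝔻. -/
set_option maxHeartbeats 1000000
open Complex Metric Real ComplexConjugate

lemma myconj (f : ℝ → ℂ) (a b : ℝ) : ∫ x in a..b, conj (f x) = conj (∫ x in a..b, f x) := by
  rw [intervalIntegral, intervalIntegral, integral_conj, integral_conj, ← map_sub]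

/-- Key Cauchy-type integral identity. -/
lemma key_integral {R : ℝ} (hR : 1 < R) {g : ℂ → ℂ} (hg : DifferentiableOn ℂ g (ball 0 R))
    {z w : ℂ} (hz : ‖z‖ < 1) (hw : ‖w‖ < 1) :
    ∫ θ in (0:ℝ)..(2*π), g (circleMap 0 1 θ) *
        ((1 - z * (circleMap 0 1 θ)⁻¹)⁻¹ * conj ((1 - w * (circleMap 0 1 θ)⁻¹)⁻¹))
      = 2 * π * (g z / (1 - z * conj w)) := by
  set F : ℂ → ℂ := fun ζ => g ζ * (1 - conj w * ζ)⁻¹ with hF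
  have habs : ∀ ζ : ℂ, ‖ζ‖ ≤ 1 → 1 - conj w * ζ ≠ 0 := by
    intro ζ hζ h
    have : ‖conj w * ζ‖ < 1 := by
      rw [norm_mul, Complex.norm_conj]
      calc ‖w‖ * ‖ζ‖ ≤ ‖w‖ * 1 :=
            mul_le_mul_of_nonneg_left hζ (norm_nonneg w)
        _ < 1 := by simpa using hw
    rw [sub_eq_zero] at h
    rw [← h] at this
    simp at this
  have hFd : DiffContOnCl ℂ F (ball 0 1) := by
    constructor
    · apply DifferentiableOn.mul
      · exact hg.mono (ball_subset_ball hR.le)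
      · apply DifferentiableOn.inv
        · apply DifferentiableOn.sub (differentiableOn_const _)
          exact (differentiable_id.const_mul _).differentiableOn
        · intro ζ hζ
          exact habs ζ (le_of_lt (by simpa [mem_ball_zero_iff] using hζ))
    · rw [closure_ball (0:ℂ) one_ne_zero]
      apply ContinuousOn.mul
      · exact (hg.continuousOn).mono (fun ζ hζ => by
          simp only [mem_closedBall_zero_iff] at hζ
          exact mem_ball_zero_iff.mpr (lt_of_le_of_lt hζ hR))
      · apply ContinuousOn.inv₀
        · fun_prop
        · intro ζ hζ
          exact habs ζ (by simpa [mem_closedBall_zero_iff] using hζ)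
  have hzball : z ∈ ball (0:ℂ) 1 := mem_ball_zero_iff.mpr hz
  have cauchy := hFd.circleIntegral_sub_inv_smul hzball
  rw [circleIntegral] at cauchy
  simp only [deriv_circleMap, smul_eq_mul] at cauchy
  have hptwise : ∀ θ : ℝ, circleMap 0 1 θ * I * ((circleMap 0 1 θ - z)⁻¹ * F (circleMap 0 1 θ))
      = I * (g (circleMap 0 1 θ) *
        ((1 - z * (circleMap 0 1 θ)⁻¹)⁻¹ * conj ((1 - w * (circleMap 0 1 θ)⁻¹)⁻¹))) := by
    intro θ
    set u := circleMap 0 1 θ with hu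
    have hu0 : u ≠ 0 := circleMap_ne_center one_ne_zero
    have huabs : ‖u‖ = 1 := by simp [hu]
    have huz : u - z ≠ 0 := by
      intro h; rw [sub_eq_zero] at h; rw [← h] at hz; exact absurd huabs (by linarith)
    have hwden : 1 - conj w * u ≠ 0 := habs u huabs.le
    have hcu : conj (u⁻¹) = u := by rw [map_inv₀, ← Complex.inv_eq_conj huabs, inv_inv]
    have hconj : conj ((1 - w * u⁻¹)⁻¹) = (1 - conj w * u)⁻¹ := by
      rw [map_inv₀, map_sub, map_one, map_mul, hcu]
    rw [hconj, hF]
    field_simp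
  rw [intervalIntegral.integral_congr (fun θ _ => hptwise θ)] at cauchy
  rw [intervalIntegral.integral_const_mul] at cauchy
  have hI : (2 * ↑π * I : ℂ) * F z = I * (2 * π * (g z / (1 - z * conj w))) := by
    rw [hF]
    have h1 : (1 - z * conj w) ≠ 0 := by
      intro h; rw [sub_eq_zero] at h
      have : ‖z * conj w‖ < 1 := by
        rw [norm_mul, Complex.norm_conj]
        nlinarith [norm_nonneg z, norm_nonneg w]
      rw [← h] at this; simp at this
    have h2 : (1 - conj w * z) ≠ 0 := by rwa [mul_comm] at h1
    field_simp
  rw [hI] at cauchy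
  exact mul_left_cancel₀ I_ne_zero cauchy

lemma den_ne {z : ℂ} (hz : ‖z‖ < 1) (θ : ℝ) :
    1 - z * (circleMap 0 1 θ)⁻¹ ≠ 0 := by
  intro h
  rw [sub_eq_zero] at h
  have habs : ‖z * (circleMap 0 1 θ)⁻¹‖ = ‖z‖ := by
    rw [norm_mul, norm_inv]; simp
  rw [← h] at habs; simp at habs; linarith

lemma contA {z : ℂ} (hz : ‖z‖ < 1) :
    Continuous (fun θ : ℝ => (1 - z * (circleMap 0 1 θ)⁻¹)⁻¹) := by
  apply Continuous.inv₀
  · exact continuous_const.sub (continuous_const.mul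
      ((continuous_circleMap 0 1).inv₀ (fun θ => circleMap_ne_center one_ne_zero)))
  · exact fun θ => den_ne hz θ

lemma contg {R : ℝ} (hR : 1 < R) {g : ℂ → ℂ} (hg : DifferentiableOn ℂ g (ball 0 R)) :
    Continuous (fun θ : ℝ => g (circleMap 0 1 θ)) := by
  apply hg.continuousOn.comp_continuous (continuous_circleMap 0 1)
  intro θ
  rw [mem_ball_zero_iff,
    show ‖circleMap 0 1 θ‖ = 1 by simp]
  exact hR

lemma pair_integral {R : ℝ} (hR : 1 < R) {g : ℂ → ℂ} (hg : DifferentiableOn ℂ g (ball 0 R))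
    {n : ℕ} {z : Fin n → ℂ} (hz : ∀ i, ‖z i‖ < 1) (d e : Fin n → ℂ) :
    ∫ θ in (0:ℝ)..(2*π), g (circleMap 0 1 θ) *
        ((∑ i, d i * (1 - z i * (circleMap 0 1 θ)⁻¹)⁻¹) *
          conj (∑ j, e j * (1 - z j * (circleMap 0 1 θ)⁻¹)⁻¹))
      = 2 * π * ∑ i, ∑ j, d i * conj (e j) * (g (z i) / (1 - z i * conj (z j))) := by
  have hexp : ∀ θ : ℝ, g (circleMap 0 1 θ) *
        ((∑ i, d i * (1 - z i * (circleMap 0 1 θ)⁻¹)⁻¹) *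
          conj (∑ j, e j * (1 - z j * (circleMap 0 1 θ)⁻¹)⁻¹))
      = ∑ i, ∑ j, (d i * conj (e j)) * (g (circleMap 0 1 θ) *
          ((1 - z i * (circleMap 0 1 θ)⁻¹)⁻¹ *
            conj ((1 - z j * (circleMap 0 1 θ)⁻¹)⁻¹))) := by
    intro θ
    rw [map_sum, Finset.sum_mul_sum, Finset.mul_sum]
    apply Finset.sum_congr rfl
    intro i _
    rw [Finset.mul_sum]
    apply Finset.sum_congr rfl
    intro j _
    rw [map_mul]
    ring
  rw [intervalIntegral.integral_congr (fun θ _ => hexp θ)]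
  have contTerm : ∀ (i j : Fin n), Continuous (fun θ : ℝ =>
      (d i * conj (e j)) * (g (circleMap 0 1 θ) *
        ((1 - z i * (circleMap 0 1 θ)⁻¹)⁻¹ * conj ((1 - z j * (circleMap 0 1 θ)⁻¹)⁻¹)))) :=
    fun i j => continuous_const.mul ((contg hR hg).mul
      ((contA (hz i)).mul (Complex.continuous_conj.comp (contA (hz j)))))
  have hint : ∀ (i j : Fin n), IntervalIntegrable (fun θ : ℝ =>
      (d i * conj (e j)) * (g (circleMap 0 1 θ) *
        ((1 - z i * (circleMap 0 1 θ)⁻¹)⁻¹ * conj ((1 - z j * (circleMap 0 1 θ)⁻¹)⁻¹))))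
      MeasureTheory.volume 0 (2*π) :=
    fun i j => (contTerm i j).intervalIntegrable _ _
  have h1 : ∫ θ in (0:ℝ)..(2*π), ∑ i, ∑ j, (d i * conj (e j)) * (g (circleMap 0 1 θ) *
        ((1 - z i * (circleMap 0 1 θ)⁻¹)⁻¹ * conj ((1 - z j * (circleMap 0 1 θ)⁻¹)⁻¹)))
      = ∑ i, ∑ j, ∫ θ in (0:ℝ)..(2*π), (d i * conj (e j)) * (g (circleMap 0 1 θ) *
        ((1 - z i * (circleMap 0 1 θ)⁻¹)⁻¹ * conj ((1 - z j * (circleMap 0 1 θ)⁻¹)⁻¹))) := by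
    have hrowint : ∀ i : Fin n, IntervalIntegrable (fun θ : ℝ => ∑ j,
        (d i * conj (e j)) * (g (circleMap 0 1 θ) *
          ((1 - z i * (circleMap 0 1 θ)⁻¹)⁻¹ * conj ((1 - z j * (circleMap 0 1 θ)⁻¹)⁻¹))))
        MeasureTheory.volume 0 (2*π) :=
      fun i => (continuous_finset_sum Finset.univ (fun j _ => contTerm i j)).intervalIntegrable _ _
    rw [intervalIntegral.integral_finset_sum (f := fun i θ => ∑ j,
      (d i * conj (e j)) * (g (circleMap 0 1 θ) *
        ((1 - z i * (circleMap 0 1 θ)⁻¹)⁻¹ * conj ((1 - z j * (circleMap 0 1 θ)⁻¹)⁻¹))))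
      (fun i _ => hrowint i)]
    exact Finset.sum_congr rfl (fun i _ =>
      intervalIntegral.integral_finset_sum (fun j _ => hint i j))
  rw [h1, Finset.mul_sum]
  apply Finset.sum_congr rfl
  intro i _
  rw [Finset.mul_sum]
  apply Finset.sum_congr rfl
  intro j _
  rw [intervalIntegral.integral_const_mul, key_integral hR hg (hz i) (hz j)]
  ring

open scoped ComplexOrder in
lemma gram_nonneg_big {R : ℝ} (hR : 1 < R) {f : ℂ → ℂ}
    (hf : DifferentiableOn ℂ f (ball 0 R))
    (hb : ∀ θ : ℝ, ‖f (circleMap 0 1 θ)‖ ≤ 1)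
    {n : ℕ} {z : Fin n → ℂ} (hz : ∀ i, ‖z i‖ < 1) (c : Fin n → ℂ) :
    0 ≤ ∑ i, ∑ j, c i * conj (c j) *
        ((1 - f (z i) * conj (f (z j))) / (1 - z i * conj (z j))) := by
  have contG : Continuous (fun θ : ℝ => ∑ i, c i * (1 - z i * (circleMap 0 1 θ)⁻¹)⁻¹) :=
    continuous_finset_sum _ (fun i _ => continuous_const.mul (contA (hz i)))
  have contH : Continuous (fun θ : ℝ =>
      ∑ i, (c i * f (z i)) * (1 - z i * (circleMap 0 1 θ)⁻¹)⁻¹) :=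
    continuous_finset_sum _ (fun i _ => continuous_const.mul (contA (hz i)))
  have contF : Continuous (fun θ : ℝ => f (circleMap 0 1 θ)) := contg hR hf
  have h1 := pair_integral hR (differentiableOn_const (1:ℂ)) hz c c
  have h2 := pair_integral hR (differentiableOn_const (1:ℂ)) hz
      (fun i => c i * f (z i)) (fun i => c i * f (z i))
  have h3 := pair_integral hR hf hz c (fun i => c i * f (z i))
  simp only [one_mul] at h1 h2
  have hT : ∑ i, ∑ j, c i * conj ((fun i => c i * f (z i)) j) *
        (f (z i) / (1 - z i * conj (z j)))
      = ∑ i, ∑ j, (c i * f (z i)) * conj (c j * f (z j)) * (1 / (1 - z i * conj (z j))) := by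
    apply Finset.sum_congr rfl; intro i _
    apply Finset.sum_congr rfl; intro j _
    simp only [map_mul, div_eq_mul_inv, one_mul]
    ring
  rw [hT] at h3
  have iGH : IntervalIntegrable (fun θ : ℝ => f (circleMap 0 1 θ) *
      ((∑ i, c i * (1 - z i * (circleMap 0 1 θ)⁻¹)⁻¹) *
        conj (∑ j, (c j * f (z j)) * (1 - z j * (circleMap 0 1 θ)⁻¹)⁻¹)))
      MeasureTheory.volume 0 (2*π) :=
    (contF.mul (contG.mul (Complex.continuous_conj.comp contH))).intervalIntegrable _ _
  have iHH : IntervalIntegrable (fun θ : ℝ =>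
      (∑ i, (c i * f (z i)) * (1 - z i * (circleMap 0 1 θ)⁻¹)⁻¹) *
        conj (∑ j, (c j * f (z j)) * (1 - z j * (circleMap 0 1 θ)⁻¹)⁻¹))
      MeasureTheory.volume 0 (2*π) :=
    (contH.mul (Complex.continuous_conj.comp contH)).intervalIntegrable _ _
  have iGG : IntervalIntegrable (fun θ : ℝ =>
      (∑ i, c i * (1 - z i * (circleMap 0 1 θ)⁻¹)⁻¹) *
        conj (∑ j, c j * (1 - z j * (circleMap 0 1 θ)⁻¹)⁻¹))
      MeasureTheory.volume 0 (2*π) :=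
    (contG.mul (Complex.continuous_conj.comp contG)).intervalIntegrable _ _
  have iX : IntervalIntegrable (fun θ : ℝ => f (circleMap 0 1 θ) *
        ((∑ i, c i * (1 - z i * (circleMap 0 1 θ)⁻¹)⁻¹) *
          conj (∑ j, (c j * f (z j)) * (1 - z j * (circleMap 0 1 θ)⁻¹)⁻¹))
      - (∑ i, (c i * f (z i)) * (1 - z i * (circleMap 0 1 θ)⁻¹)⁻¹) *
          conj (∑ j, (c j * f (z j)) * (1 - z j * (circleMap 0 1 θ)⁻¹)⁻¹))
      MeasureTheory.volume 0 (2*π) := iGH.sub iHH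
  have iconjX : IntervalIntegrable (fun θ : ℝ => conj (f (circleMap 0 1 θ) *
        ((∑ i, c i * (1 - z i * (circleMap 0 1 θ)⁻¹)⁻¹) *
          conj (∑ j, (c j * f (z j)) * (1 - z j * (circleMap 0 1 θ)⁻¹)⁻¹))
      - (∑ i, (c i * f (z i)) * (1 - z i * (circleMap 0 1 θ)⁻¹)⁻¹) *
          conj (∑ j, (c j * f (z j)) * (1 - z j * (circleMap 0 1 θ)⁻¹)⁻¹)))
      MeasureTheory.volume 0 (2*π) :=
    (Complex.continuous_conj.comp ((contF.mul (contG.mul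
      (Complex.continuous_conj.comp contH))).sub
      (contH.mul (Complex.continuous_conj.comp contH)))).intervalIntegrable _ _
  have iRe : IntervalIntegrable (fun θ : ℝ =>
      (((1 - Complex.normSq (f (circleMap 0 1 θ))) *
          Complex.normSq (∑ i, c i * (1 - z i * (circleMap 0 1 θ)⁻¹)⁻¹)
        + Complex.normSq (f (circleMap 0 1 θ) *
            (∑ i, c i * (1 - z i * (circleMap 0 1 θ)⁻¹)⁻¹)
          - ∑ i, (c i * f (z i)) * (1 - z i * (circleMap 0 1 θ)⁻¹)⁻¹) : ℝ) : ℂ))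
      MeasureTheory.volume 0 (2*π) := by
    apply Continuous.intervalIntegrable
    apply Complex.continuous_ofReal.comp
    apply Continuous.add
    · exact (continuous_const.sub (Complex.continuous_normSq.comp contF)).mul
        (Complex.continuous_normSq.comp contG)
    · exact Complex.continuous_normSq.comp ((contF.mul contG).sub contH)
  have hX : (∫ θ in (0:ℝ)..(2*π), (f (circleMap 0 1 θ) *
        ((∑ i, c i * (1 - z i * (circleMap 0 1 θ)⁻¹)⁻¹) *
          conj (∑ j, (c j * f (z j)) * (1 - z j * (circleMap 0 1 θ)⁻¹)⁻¹))
      - (∑ i, (c i * f (z i)) * (1 - z i * (circleMap 0 1 θ)⁻¹)⁻¹) *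
          conj (∑ j, (c j * f (z j)) * (1 - z j * (circleMap 0 1 θ)⁻¹)⁻¹))) = 0 := by
    rw [intervalIntegral.integral_sub iGH iHH, h3, h2, sub_self]
  have hXconj : (∫ θ in (0:ℝ)..(2*π), conj (f (circleMap 0 1 θ) *
        ((∑ i, c i * (1 - z i * (circleMap 0 1 θ)⁻¹)⁻¹) *
          conj (∑ j, (c j * f (z j)) * (1 - z j * (circleMap 0 1 θ)⁻¹)⁻¹))
      - (∑ i, (c i * f (z i)) * (1 - z i * (circleMap 0 1 θ)⁻¹)⁻¹) *
          conj (∑ j, (c j * f (z j)) * (1 - z j * (circleMap 0 1 θ)⁻¹)⁻¹))) = 0 := by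
    rw [myconj, hX, map_zero]
  have hrpos : 0 ≤ ∫ θ in (0:ℝ)..(2*π),
      ((1 - Complex.normSq (f (circleMap 0 1 θ))) *
        Complex.normSq (∑ i, c i * (1 - z i * (circleMap 0 1 θ)⁻¹)⁻¹)
      + Complex.normSq (f (circleMap 0 1 θ) *
          (∑ i, c i * (1 - z i * (circleMap 0 1 θ)⁻¹)⁻¹)
        - ∑ i, (c i * f (z i)) * (1 - z i * (circleMap 0 1 θ)⁻¹)⁻¹)) := by
    apply intervalIntegral.integral_nonneg (by positivity)
    intro θ _
    have h1' : Complex.normSq (f (circleMap 0 1 θ)) ≤ 1 := by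
      rw [Complex.normSq_eq_norm_sq]
      nlinarith [hb θ, norm_nonneg (f (circleMap 0 1 θ))]
    have h2' := Complex.normSq_nonneg (∑ i, c i * (1 - z i * (circleMap 0 1 θ)⁻¹)⁻¹)
    have h3' := Complex.normSq_nonneg (f (circleMap 0 1 θ) *
          (∑ i, c i * (1 - z i * (circleMap 0 1 θ)⁻¹)⁻¹)
        - ∑ i, (c i * f (z i)) * (1 - z i * (circleMap 0 1 θ)⁻¹)⁻¹)
    nlinarith
  have hpt : ∀ θ : ℝ,
      (∑ i, c i * (1 - z i * (circleMap 0 1 θ)⁻¹)⁻¹) *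
          conj (∑ j, c j * (1 - z j * (circleMap 0 1 θ)⁻¹)⁻¹)
        - (∑ i, (c i * f (z i)) * (1 - z i * (circleMap 0 1 θ)⁻¹)⁻¹) *
          conj (∑ j, (c j * f (z j)) * (1 - z j * (circleMap 0 1 θ)⁻¹)⁻¹)
      = (((1 - Complex.normSq (f (circleMap 0 1 θ))) *
            Complex.normSq (∑ i, c i * (1 - z i * (circleMap 0 1 θ)⁻¹)⁻¹)
          + Complex.normSq (f (circleMap 0 1 θ) *
              (∑ i, c i * (1 - z i * (circleMap 0 1 θ)⁻¹)⁻¹)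
            - ∑ i, (c i * f (z i)) * (1 - z i * (circleMap 0 1 θ)⁻¹)⁻¹) : ℝ) : ℂ)
        + ((f (circleMap 0 1 θ) *
            ((∑ i, c i * (1 - z i * (circleMap 0 1 θ)⁻¹)⁻¹) *
              conj (∑ j, (c j * f (z j)) * (1 - z j * (circleMap 0 1 θ)⁻¹)⁻¹))
          - (∑ i, (c i * f (z i)) * (1 - z i * (circleMap 0 1 θ)⁻¹)⁻¹) *
              conj (∑ j, (c j * f (z j)) * (1 - z j * (circleMap 0 1 θ)⁻¹)⁻¹))
          + conj (f (circleMap 0 1 θ) *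
            ((∑ i, c i * (1 - z i * (circleMap 0 1 θ)⁻¹)⁻¹) *
              conj (∑ j, (c j * f (z j)) * (1 - z j * (circleMap 0 1 θ)⁻¹)⁻¹))
          - (∑ i, (c i * f (z i)) * (1 - z i * (circleMap 0 1 θ)⁻¹)⁻¹) *
              conj (∑ j, (c j * f (z j)) * (1 - z j * (circleMap 0 1 θ)⁻¹)⁻¹))) := by
    intro θ
    push_cast
    rw [← Complex.mul_conj, ← Complex.mul_conj, ← Complex.mul_conj]
    simp only [map_sub, map_mul, Complex.conj_conj]
    ring
  have hmain : (2 * (π:ℝ) : ℂ) *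
        ((∑ i, ∑ j, c i * conj (c j) * (1 / (1 - z i * conj (z j))))
        - ∑ i, ∑ j, (c i * f (z i)) * conj (c j * f (z j)) * (1 / (1 - z i * conj (z j))))
      = ((∫ θ in (0:ℝ)..(2*π),
      ((1 - Complex.normSq (f (circleMap 0 1 θ))) *
        Complex.normSq (∑ i, c i * (1 - z i * (circleMap 0 1 θ)⁻¹)⁻¹)
      + Complex.normSq (f (circleMap 0 1 θ) *
          (∑ i, c i * (1 - z i * (circleMap 0 1 θ)⁻¹)⁻¹)
        - ∑ i, (c i * f (z i)) * (1 - z i * (circleMap 0 1 θ)⁻¹)⁻¹)) : ℝ) : ℂ) := by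
    push_cast
    rw [mul_sub, ← h1, ← h2, ← intervalIntegral.integral_sub iGG iHH]
    rw [intervalIntegral.integral_congr (fun θ _ => hpt θ)]
    rw [intervalIntegral.integral_add iRe (iX.add iconjX),
        intervalIntegral.integral_add iX iconjX, hX, hXconj,
        intervalIntegral.integral_ofReal]
    push_cast
    ring
  -- conclude
  have hgoal : ∑ i, ∑ j, c i * conj (c j) *
        ((1 - f (z i) * conj (f (z j))) / (1 - z i * conj (z j)))
      = (∑ i, ∑ j, c i * conj (c j) * (1 / (1 - z i * conj (z j))))
        - ∑ i, ∑ j, (c i * f (z i)) * conj (c j * f (z j)) * (1 / (1 - z i * conj (z j))) := by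
    rw [← Finset.sum_sub_distrib]
    apply Finset.sum_congr rfl; intro i _
    rw [← Finset.sum_sub_distrib]
    apply Finset.sum_congr rfl; intro j _
    simp only [map_mul, sub_div, div_eq_mul_inv, one_mul, mul_sub]
    ring
  rw [hgoal]
  have h2pi : ((2 * (π:ℝ) : ℝ) : ℂ) ≠ 0 := by
    simp [Real.pi_ne_zero]
  set q : ℝ := ∫ θ in (0:ℝ)..(2*π),
      ((1 - Complex.normSq (f (circleMap 0 1 θ))) *
        Complex.normSq (∑ i, c i * (1 - z i * (circleMap 0 1 θ)⁻¹)⁻¹)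
      + Complex.normSq (f (circleMap 0 1 θ) *
          (∑ i, c i * (1 - z i * (circleMap 0 1 θ)⁻¹)⁻¹)
        - ∑ i, (c i * f (z i)) * (1 - z i * (circleMap 0 1 θ)⁻¹)⁻¹)) with hq
  have : (∑ i, ∑ j, c i * conj (c j) * (1 / (1 - z i * conj (z j))))
        - ∑ i, ∑ j, (c i * f (z i)) * conj (c j * f (z j)) * (1 / (1 - z i * conj (z j)))
      = ((q / (2 * π) : ℝ) : ℂ) := by
    have := hmain
    push_cast at this ⊢
    field_simp at this ⊢
    linear_combination this
  rw [this]
  exact Complex.zero_le_real.mpr (div_nonneg hrpos (by positivity))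

open scoped Topology in
open scoped ComplexOrder in
lemma gram_nonneg_disk {f : ℂ → ℂ} (hf : DifferentiableOn ℂ f (ball 0 1))
    (hb : ∀ ζ ∈ ball (0:ℂ) 1, ‖f ζ‖ ≤ 1)
    {n : ℕ} {z : Fin n → ℂ} (hz : ∀ i, ‖z i‖ < 1) (c : Fin n → ℂ) :
    0 ≤ ∑ i, ∑ j, c i * conj (c j) *
        ((1 - f (z i) * conj (f (z j))) / (1 - z i * conj (z j))) := by
  have hstep : ∀ t : ℝ, t ∈ Set.Ioo (0:ℝ) 1 →
      0 ≤ ∑ i, ∑ j, c i * conj (c j) *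
        ((1 - f ((t:ℂ) * z i) * conj (f ((t:ℂ) * z j))) / (1 - z i * conj (z j))) := by
    intro t ht
    have h0 : (0:ℝ) < t := ht.1
    have h1 : t < 1 := ht.2
    have hR : 1 < t⁻¹ := (one_lt_inv₀ h0).mpr h1
    have hmaps : ∀ ζ ∈ ball (0:ℂ) (t⁻¹ : ℝ), (t:ℂ) * ζ ∈ ball (0:ℂ) 1 := by
      intro ζ hζ
      rw [mem_ball_zero_iff] at hζ ⊢
      rw [norm_mul, Complex.norm_real, Real.norm_eq_abs, abs_of_pos h0]
      calc t * ‖ζ‖ < t * t⁻¹ := by exact mul_lt_mul_of_pos_left hζ h0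
        _ = 1 := mul_inv_cancel₀ h0.ne'
    have hfd : DifferentiableOn ℂ (fun ζ => f ((t:ℂ) * ζ)) (ball 0 (t⁻¹ : ℝ)) := by
      apply DifferentiableOn.comp hf
      · exact (differentiable_id.const_mul _).differentiableOn
      · exact hmaps
    have hbb : ∀ θ : ℝ, ‖f ((t:ℂ) * circleMap 0 1 θ)‖ ≤ 1 := by
      intro θ
      apply hb
      rw [mem_ball_zero_iff, norm_mul, Complex.norm_real, Real.norm_eq_abs, abs_of_pos h0]
      rw [show ‖circleMap 0 1 θ‖ = 1 by simp]
      simpa using h1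
    exact gram_nonneg_big hR hfd hbb hz c
  have base : ∀ k : Fin n, Filter.Tendsto (fun t : ℝ => f ((t:ℂ) * z k))
      (𝓝[<] (1:ℝ)) (𝓝 (f (z k))) := by
    intro k
    have hcont : ContinuousWithinAt f (ball 0 1) (z k) :=
      hf.continuousOn _ (mem_ball_zero_iff.mpr (by simpa using hz k))
    apply hcont.tendsto.comp
    apply tendsto_nhdsWithin_of_tendsto_nhds_of_eventually_within
    · have hc : Continuous (fun t : ℝ => (t:ℂ) * z k) :=
        (Complex.continuous_ofReal.mul continuous_const)
      have := hc.tendsto (1:ℝ)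
      simp only [Complex.ofReal_one, one_mul] at this
      exact this.mono_left nhdsWithin_le_nhds
    · filter_upwards [Ioo_mem_nhdsLT_of_mem (⟨one_pos, le_refl (1:ℝ)⟩ : (1:ℝ) ∈ Set.Ioc 0 1)]
        with t ht
      rw [mem_ball_zero_iff, norm_mul, Complex.norm_real, Real.norm_eq_abs, abs_of_pos ht.1]
      calc t * ‖z k‖ ≤ 1 * ‖z k‖ := by
            exact mul_le_mul_of_nonneg_right ht.2.le (norm_nonneg _)
        _ = ‖z k‖ := one_mul _
        _ < 1 := by simpa using hz k
  have htend : Filter.Tendsto (fun t : ℝ => ∑ i, ∑ j, c i * conj (c j) *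
        ((1 - f ((t:ℂ) * z i) * conj (f ((t:ℂ) * z j))) / (1 - z i * conj (z j))))
      (𝓝[<] (1:ℝ)) (𝓝 (∑ i, ∑ j, c i * conj (c j) *
        ((1 - f (z i) * conj (f (z j))) / (1 - z i * conj (z j))))) := by
    apply tendsto_finset_sum
    intro i _
    apply tendsto_finset_sum
    intro j _
    apply Filter.Tendsto.mul tendsto_const_nhds
    apply Filter.Tendsto.div_const
    apply Filter.Tendsto.sub tendsto_const_nhds
    exact (base i).mul ((Complex.continuous_conj.tendsto _).comp (base j))
  apply ge_of_tendsto htend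
  filter_upwards [Ioo_mem_nhdsLT_of_mem (⟨one_pos, le_refl (1:ℝ)⟩ : (1:ℝ) ∈ Set.Ioc 0 1)]
    with t ht using hstep t ht

open scoped ComplexOrder

/-- A ℂ-valued positive kernel on a set `Ω`: all finite "Gram sums" are nonnegative
(real) numbers. -/
def IsPositiveKernel {Ω : Type*} (k : Ω → Ω → ℂ) : Prop :=
  ∀ (n : ℕ) (z : Fin n → Ω) (c : Fin n → ℂ),
    0 ≤ ∑ i, ∑ j, c i * (starRingEnd ℂ) (c j) * k (z i) (z j)

/-- A holomorphic function `s` on the unit disk is bounded by `1` in modulus iff the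
de Branges–Rovnyak kernel `K_s(z,w) = (1 - s z ⋅ conj (s w)) / (1 - z ⋅ conj w)` is a
positive kernel on the disk. -/
theorem stmt0 (s : ℂ → ℂ) (hs : DifferentiableOn ℂ s (ball (0 : ℂ) 1)) :
    (∀ z ∈ ball (0 : ℂ) 1, ‖s z‖ ≤ 1) ↔
      IsPositiveKernel (fun z w : ball (0 : ℂ) 1 =>
        (1 - s z * (starRingEnd ℂ) (s w)) / (1 - (z : ℂ) * (starRingEnd ℂ) (w : ℂ))) := by
  constructor
  · intro h n zs cs
    have hz : ∀ i, ‖(zs i : ℂ)‖ < 1 := by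
      intro i
      have := (zs i).2
      rwa [mem_ball_zero_iff] at this
    exact gram_nonneg_disk hs h hz cs
  · intro hK ζ hζ
    have := hK 1 (fun _ => ⟨ζ, hζ⟩) (fun _ => 1)
    simp only [Fin.sum_univ_one, map_one, one_mul] at this
    have habs : ‖ζ‖ < 1 := by
      rwa [mem_ball_zero_iff] at hζ
    have hden : (0:ℝ) < 1 - Complex.normSq ζ := by
      rw [Complex.normSq_eq_norm_sq]
      nlinarith [norm_nonneg ζ]
    have hre : (0:ℝ) ≤ ((1 - s ζ * conj (s ζ)) / (1 - ζ * conj ζ)).re ∧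
        ((1 - s ζ * conj (s ζ)) / (1 - ζ * conj ζ)).im = 0 := by
      have h' := this
      rw [Complex.le_def] at h'
      exact ⟨by simpa using h'.1, by simpa using h'.2.symm⟩
    have hq : ((1 - s ζ * conj (s ζ)) / (1 - ζ * conj ζ))
        = (((1 - Complex.normSq (s ζ)) / (1 - Complex.normSq ζ) : ℝ) : ℂ) := by
      rw [Complex.mul_conj, Complex.mul_conj]
      norm_cast
    rw [hq] at hre
    have hre' : (0:ℝ) ≤ (1 - Complex.normSq (s ζ)) / (1 - Complex.normSq ζ) := by
      have h'' := hre.1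
      rwa [Complex.ofReal_re] at h''
    have hnum : (0:ℝ) ≤ 1 - Complex.normSq (s ζ) := by
      by_contra hneg
      push_neg at hneg
      have := div_neg_of_neg_of_pos hneg hden
      linarith
    have : ‖s ζ‖ ^ 2 ≤ 1 := by
      rw [← Complex.normSq_eq_norm_sq]; linarith
    nlinarith [norm_nonneg (s ζ)]
end

section
/- Let E be a complex Hilbert space, Ω a set, and K : Ω × Ω → B(E). Then K is a positive kernel if and only if K admits a Kolmogorov decomposition: there exist a complex Hilbert space X and a function H : Ω → B(X, E) such that K(z,w) = H(z) ∘ H(w)* for all z, w ∈ Ω. -/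
open scoped ComplexOrder

/-- An operator-valued positive kernel on a set `Ω`: all finite Gram sums
`∑ᵢⱼ ⟪K(zᵢ,zⱼ) eⱼ, eᵢ⟫` (inner ℂ product linear in the left slot) are nonnegative reals. -/
def IsOpPositiveKernel {Ω : Type*} {E : Type*} [NormedAddCommGroup E]
    [InnerProductSpace ℂ E] (K : Ω → Ω → E →L[ℂ] E) : Prop :=
  ∀ (n : ℕ) (z : Fin n → Ω) (e : Fin n → E),
    0 ≤ ∑ i, ∑ j, (inner ℂ (e i) ((K (z i) (z j)) (e j)) : ℂ)

universe u v

open ComplexConjugate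

section Aux

variable {Ω : Type u} {E : Type v} [NormedAddCommGroup E] [InnerProductSpace ℂ E]

/-- Symmetry of a positive kernel: `⟪e, K z w f⟫ = conj ⟪f, K w z e⟫`. -/
lemma pk_symm {K : Ω → Ω → E →L[ℂ] E} (hK : IsOpPositiveKernel K) (z w : Ω) (e f : E) :
    (inner ℂ e ((K z w) f) : ℂ) = conj (inner ℂ f ((K w z) e) : ℂ) := by
  have h1 : ∀ (x : Ω) (u : E), ((inner ℂ u ((K x x) u) : ℂ)).im = 0 := by
    intro x u
    have := hK 1 ![x] ![u]
    simp [Fin.sum_univ_one] at this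
    rw [Complex.le_def] at this
    exact this.2.symm
  have key : ∀ c : ℂ, 0 ≤ (inner ℂ e ((K z z) e) : ℂ) + c * inner ℂ e ((K z w) f)
      + conj c * inner ℂ f ((K w z) e) + conj c * c * inner ℂ f ((K w w) f) := by
    intro c
    have := hK 2 ![z, w] ![e, c • f]
    simpa [Fin.sum_univ_two, inner_smul_left, inner_smul_right, map_smul, mul_comm, mul_assoc,
      mul_left_comm, add_assoc] using this
  set A : ℂ := inner ℂ e ((K z w) f)
  set B : ℂ := inner ℂ f ((K w z) e)
  have hzz := h1 z e
  have hww := h1 w f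
  have k1 := key 1
  have ki := key Complex.I
  rw [Complex.le_def] at k1 ki
  have e1 : A.im + B.im = 0 := by
    have h := k1.2
    simp [hzz, hww] at h
    linarith
  have e2 : A.re - B.re = 0 := by
    have h := ki.2
    simp [Complex.add_im, Complex.mul_im, Complex.conj_im, Complex.conj_re, hzz, hww,
      Complex.I_re, Complex.I_im] at h
    linarith
  apply Complex.ext
  · simp [Complex.conj_re]; linarith
  · simp [Complex.conj_im]; linarith

/-- Positivity of Gram sums over an arbitrary finite set. -/
lemma pk_sum_nonneg {K : Ω → Ω → E →L[ℂ] E} (hK : IsOpPositiveKernel K)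
    (s : Finset Ω) (g : Ω → E) :
    0 ≤ ∑ z ∈ s, ∑ w ∈ s, (inner ℂ (g z) ((K z w) (g w)) : ℂ) := by
  classical
  have hs : ∀ (F : Ω → ℂ), ∑ z ∈ s, F z = ∑ i : Fin s.card, F (s.equivFin.symm i) := by
    intro F
    rw [← Finset.sum_coe_sort s F, ← Equiv.sum_comp s.equivFin.symm (fun x : s => F (x : Ω))]
  rw [hs]
  have hrw : ∀ i : Fin s.card,
      ∑ w ∈ s, (inner ℂ (g (s.equivFin.symm i : Ω)) ((K (s.equivFin.symm i : Ω) w) (g w)) : ℂ)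
      = ∑ j : Fin s.card, (inner ℂ (g (s.equivFin.symm i : Ω))
          ((K (s.equivFin.symm i : Ω) (s.equivFin.symm j : Ω)) (g (s.equivFin.symm j : Ω))) : ℂ) := by
    intro i; rw [hs]
  rw [Finset.sum_congr rfl (fun i _ => hrw i)]
  exact hK s.card (fun i => s.equivFin.symm i) (fun i => g (s.equivFin.symm i))

variable (K : Ω → Ω → E →L[ℂ] E)

/-- The pre-inner ℂ product on finitely supported `E`-valued functions on `Ω`. -/
noncomputable def pkInner (f g : Ω →₀ E) : ℂ :=
  f.sum fun z a => g.sum fun w b => (inner ℂ a ((K z w) b) : ℂ)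

lemma pkInner_add_left (f g h : Ω →₀ E) :
    pkInner K (f + g) h = pkInner K f h + pkInner K g h := by
  classical
  unfold pkInner
  refine Finsupp.sum_add_index' (fun z => ?_) (fun z a b => ?_)
  · simp [Finsupp.sum]
  · rw [← Finsupp.sum_add]
    refine Finsupp.sum_congr fun w _ => ?_
    rw [inner_add_left]

lemma pkInner_smul_left (c : ℂ) (f g : Ω →₀ E) :
    pkInner K (c • f) g = conj c * pkInner K f g := by
  classical
  unfold pkInner
  rw [Finsupp.sum_smul_index' (fun z => by simp [Finsupp.sum])]
  simp only [inner_smul_left, Finsupp.sum, Finset.mul_sum]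

lemma pkInner_conj_symm {K : Ω → Ω → E →L[ℂ] E} (hK : IsOpPositiveKernel K) (f g : Ω →₀ E) :
    conj (pkInner K g f) = pkInner K f g := by
  classical
  unfold pkInner
  simp only [Finsupp.sum, map_sum]
  rw [Finset.sum_comm]
  refine Finset.sum_congr rfl fun z _ => Finset.sum_congr rfl fun w _ => ?_
  exact (pk_symm hK z w (f z) (g w)).symm

lemma pkInner_self_nonneg {K : Ω → Ω → E →L[ℂ] E} (hK : IsOpPositiveKernel K) (f : Ω →₀ E) :
    0 ≤ pkInner K f f := by
  classical
  unfold pkInner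
  simp only [Finsupp.sum]
  exact pk_sum_nonneg hK f.support f

/-- The `PreInnerProductSpace.Core` structure induced by a positive kernel. -/
noncomputable def pkCore {K : Ω → Ω → E →L[ℂ] E} (hK : IsOpPositiveKernel K) :
    PreInnerProductSpace.Core ℂ (Ω →₀ E) where
  inner := pkInner K
  conj_inner_symm := fun f g => pkInner_conj_symm hK f g
  re_inner_nonneg := fun f => by
    have := pkInner_self_nonneg hK f
    rw [Complex.le_def] at this
    exact this.1
  add_left := pkInner_add_left K
  smul_left := fun f g r => pkInner_smul_left K r f g

end Aux

/-- An `L(E)`-valued kernel is a positive kernel iff it admits a Kolmogorov decomposition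
`K(z,w) = H(z) ∘ H(w)*` through some auxiliary Hilbert space `X`. -/
theorem stmt6 {Ω : Type u} {E : Type v} [NormedAddCommGroup E] [InnerProductSpace ℂ E]
    [CompleteSpace E] (K : Ω → Ω → E →L[ℂ] E) :
    IsOpPositiveKernel K ↔
      ∃ (X : Type (max u v)) (_ : NormedAddCommGroup X) (_ : InnerProductSpace ℂ X)
        (_ : CompleteSpace X) (H : Ω → X →L[ℂ] E),
        ∀ z w, K z w = (H z).comp (ContinuousLinearMap.adjoint (H w)) := by
  constructor
  · intro hK
    classical
    letI c : PreInnerProductSpace.Core ℂ (Ω →₀ E) := pkCore hK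
    letI : SeminormedAddCommGroup (Ω →₀ E) :=
      InnerProductSpace.Core.toSeminormedAddCommGroup (𝕜 := ℂ) (F := Ω →₀ E)
    letI : NormedSpace ℂ (Ω →₀ E) :=
      InnerProductSpace.Core.toNormedSpace (𝕜 := ℂ) (F := Ω →₀ E)
    letI : InnerProductSpace ℂ (Ω →₀ E) :=
      { ‹NormedSpace ℂ (Ω →₀ E)› with
        inner := pkInner K
        norm_sq_eq_re_inner := fun x => Real.sq_sqrt (c.re_inner_nonneg x)
        conj_inner_symm := fun f g => pkInner_conj_symm hK f g
        add_left := pkInner_add_left K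
        smul_left := fun f g r => by
          have := pkInner_smul_left K r f g
          exact this }
    have hinner : ∀ f g : Ω →₀ E, (inner ℂ f g : ℂ) = pkInner K f g := fun _ _ => rfl
    -- the linear "evaluation" map
    let HL : Ω → (Ω →₀ E) →ₗ[ℂ] E := fun z => Finsupp.lsum ℂ fun w => (K z w).toLinearMap
    have HL_apply : ∀ (z : Ω) (f : Ω →₀ E), HL z f = f.sum fun w b => (K z w) b := by
      intro z f; rfl
    have key : ∀ (z : Ω) (f : Ω →₀ E) (e : E),
        pkInner K (Finsupp.single z e) f = (inner ℂ e (HL z f) : ℂ) := by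
      intro z f e
      rw [HL_apply]
      unfold pkInner
      rw [Finsupp.sum_single_index (by simp [Finsupp.sum])]
      simp only [Finsupp.sum]
      rw [inner_sum]
    -- the bound
    have bound : ∀ (z : Ω) (f : Ω →₀ E), ‖HL z f‖ ≤ Real.sqrt ‖K z z‖ * ‖f‖ := by
      intro z f
      set y : E := HL z f with hy
      have h1 : (inner ℂ y y : ℂ) = pkInner K (Finsupp.single z y) f := by
        rw [key]
      have h2 : ‖(Finsupp.single z y : Ω →₀ E)‖ ≤ Real.sqrt ‖K z z‖ * ‖y‖ := by
        have hsq : ‖(Finsupp.single z y : Ω →₀ E)‖ ^ 2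
            = RCLike.re (pkInner K (Finsupp.single z y) (Finsupp.single z y)) := by
          rw [← hinner, ← inner_self_eq_norm_sq (𝕜 := ℂ)]
        have hss : pkInner K (Finsupp.single z y) (Finsupp.single z y)
            = (inner ℂ y ((K z z) y) : ℂ) := by
          unfold pkInner
          rw [Finsupp.sum_single_index (by simp [Finsupp.sum]),
            Finsupp.sum_single_index (by simp)]
        have hle : RCLike.re ((inner ℂ y ((K z z) y) : ℂ)) ≤ ‖K z z‖ * ‖y‖ ^ 2 := by
          calc RCLike.re ((inner ℂ y ((K z z) y) : ℂ)) ≤ ‖(inner ℂ y ((K z z) y) : ℂ)‖ :=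
                RCLike.re_le_norm _
            _ ≤ ‖y‖ * ‖(K z z) y‖ := norm_inner_le_norm _ _
            _ ≤ ‖y‖ * (‖K z z‖ * ‖y‖) := by
                have := (K z z).le_opNorm y
                nlinarith [norm_nonneg y]
            _ = ‖K z z‖ * ‖y‖ ^ 2 := by ring
        have hnn : (0:ℝ) ≤ ‖(Finsupp.single z y : Ω →₀ E)‖ := norm_nonneg _
        have hsq2 : ‖(Finsupp.single z y : Ω →₀ E)‖ ^ 2 ≤ ‖K z z‖ * ‖y‖ ^ 2 := by
          rw [hsq, hss]; exact hle
        have h3 : ‖(Finsupp.single z y : Ω →₀ E)‖ ≤ Real.sqrt (‖K z z‖ * ‖y‖ ^ 2) := by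
          rw [← Real.sqrt_sq hnn]
          exact Real.sqrt_le_sqrt hsq2
        calc ‖(Finsupp.single z y : Ω →₀ E)‖ ≤ Real.sqrt (‖K z z‖ * ‖y‖ ^ 2) := h3
          _ = Real.sqrt ‖K z z‖ * ‖y‖ := by
              rw [Real.sqrt_mul (norm_nonneg _), Real.sqrt_sq (norm_nonneg _)]
      have h4 : ‖y‖ ^ 2 ≤ Real.sqrt ‖K z z‖ * ‖y‖ * ‖f‖ := by
        have hn : ‖y‖ ^ 2 = RCLike.re ((inner ℂ y y : ℂ)) :=
          (inner_self_eq_norm_sq (𝕜 := ℂ) y).symm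
        rw [hn, h1, ← hinner]
        calc RCLike.re ((inner ℂ (Finsupp.single z y : Ω →₀ E) f : ℂ))
            ≤ ‖(inner ℂ (Finsupp.single z y : Ω →₀ E) f : ℂ)‖ := RCLike.re_le_norm _
          _ ≤ ‖(Finsupp.single z y : Ω →₀ E)‖ * ‖f‖ := norm_inner_le_norm _ _
          _ ≤ Real.sqrt ‖K z z‖ * ‖y‖ * ‖f‖ := by
              have := norm_nonneg f
              nlinarith [h2]
      rcases eq_or_lt_of_le (norm_nonneg y) with h | h
      · rw [← h]
        positivity
      · nlinarith [h4]
    let HC : Ω → (Ω →₀ E) →L[ℂ] E := fun z =>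
      LinearMap.mkContinuous (HL z) (Real.sqrt ‖K z z‖) (bound z)
    -- pass to the separation quotient
    let Q := SeparationQuotient (Ω →₀ E)
    have hins : ∀ z : Ω, ∀ x y : Ω →₀ E, Inseparable x y → HC z x = HC z y :=
      fun z x y h => (h.map (HC z).continuous).eq
    let HQ : Ω → Q →L[ℂ] E := fun z =>
      { toFun := SeparationQuotient.lift (HC z) (hins z)
        map_add' := by
          rintro ⟨x⟩ ⟨y⟩
          show SeparationQuotient.lift (⇑(HC z)) (hins z)
              (SeparationQuotient.mk x + SeparationQuotient.mk y)
              = SeparationQuotient.lift (⇑(HC z)) (hins z) (SeparationQuotient.mk x)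
                + SeparationQuotient.lift (⇑(HC z)) (hins z) (SeparationQuotient.mk y)
          rw [← SeparationQuotient.mk_add, SeparationQuotient.lift_mk,
            SeparationQuotient.lift_mk, SeparationQuotient.lift_mk]
          exact (HC z).map_add x y
        map_smul' := by
          rintro a ⟨x⟩
          show SeparationQuotient.lift (⇑(HC z)) (hins z) (a • SeparationQuotient.mk x)
              = a • SeparationQuotient.lift (⇑(HC z)) (hins z) (SeparationQuotient.mk x)
          rw [← SeparationQuotient.mk_smul, SeparationQuotient.lift_mk,
            SeparationQuotient.lift_mk]
          exact (HC z).map_smul a x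
        cont := SeparationQuotient.continuous_lift_iff.mpr (HC z).continuous }
    have HQ_mk : ∀ (z : Ω) (f : Ω →₀ E), HQ z (SeparationQuotient.mk f) = HL z f := by
      intro z f; rfl
    -- the completion
    let X := UniformSpace.Completion Q
    have hd : DenseRange (⇑(UniformSpace.Completion.toComplL : Q →L[ℂ] X)) := by
      rw [UniformSpace.Completion.coe_toComplL]
      exact UniformSpace.Completion.denseRange_coe
    have he : IsUniformInducing (⇑(UniformSpace.Completion.toComplL : Q →L[ℂ] X)) := by
      rw [UniformSpace.Completion.coe_toComplL]
      exact UniformSpace.Completion.isUniformInducing_coe Q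
    let Hc : Ω → X →L[ℂ] E := fun z =>
      (HQ z).extend UniformSpace.Completion.toComplL
    have Hc_coe : ∀ (z : Ω) (q : Q),
        Hc z ((UniformSpace.Completion.toComplL : Q →L[ℂ] X) q) = HQ z q := fun z q =>
      ContinuousLinearMap.extend_eq (HQ z) hd he q
    have Hc_coe' : ∀ (z : Ω) (q : Q), Hc z (UniformSpace.Completion.coe' (α := Q) q) = HQ z q := by
      intro z q
      rw [← congrFun (UniformSpace.Completion.coe_toComplL (𝕜 := ℂ) (E := Q)) q]
      exact Hc_coe z q
    refine ⟨X, inferInstance, inferInstance, inferInstance, Hc, ?_⟩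
    intro z w
    ext e
    have hadj : (ContinuousLinearMap.adjoint (Hc w)) e
        = (UniformSpace.Completion.toComplL : Q →L[ℂ] X)
            (SeparationQuotient.mk (Finsupp.single w e)) := by
      refine ext_inner_left ℂ fun x => ?_
      refine UniformSpace.Completion.induction_on x ?_ ?_
      · exact isClosed_eq (continuous_id.inner continuous_const)
          (continuous_id.inner continuous_const)
      · intro q
        obtain ⟨v, rfl⟩ := SeparationQuotient.surjective_mk q
        rw [ContinuousLinearMap.adjoint_inner_right, Hc_coe', HQ_mk]
        rw [congrFun (UniformSpace.Completion.coe_toComplL (𝕜 := ℂ) (E := Q))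
          (SeparationQuotient.mk (Finsupp.single w e))]
        rw [UniformSpace.Completion.inner_coe, SeparationQuotient.inner_mk_mk, hinner]
        calc (inner ℂ (HL w v) e : ℂ)
            = conj ((inner ℂ e (HL w v) : ℂ)) := (inner_conj_symm (HL w v) e).symm
          _ = conj (pkInner K (Finsupp.single w e) v) := by rw [key]
          _ = pkInner K v (Finsupp.single w e) :=
              pkInner_conj_symm hK v (Finsupp.single w e)
    rw [ContinuousLinearMap.comp_apply, hadj, Hc_coe, HQ_mk, HL_apply,
      Finsupp.sum_single_index (by simp)]
  · rintro ⟨X, _, _, _, H, hH⟩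
    intro n z e
    have hterm : ∀ i j, (inner ℂ (e i) ((K (z i) (z j)) (e j)) : ℂ)
        = inner ℂ ((ContinuousLinearMap.adjoint (H (z i))) (e i))
            ((ContinuousLinearMap.adjoint (H (z j))) (e j)) := by
      intro i j
      rw [hH]
      rw [ContinuousLinearMap.comp_apply, ← ContinuousLinearMap.adjoint_inner_left]
    set v : X := ∑ i, (ContinuousLinearMap.adjoint (H (z i))) (e i) with hv
    calc (0:ℂ) ≤ (inner ℂ v v : ℂ) := by
          rw [Complex.le_def]
          constructor
          · simpa using inner_self_nonneg (𝕜 := ℂ) (x := v)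
          · have h := inner_self_im (𝕜 := ℂ) (x := v)
            simp only [RCLike.im_to_complex] at h
            rw [h, Complex.zero_im]
      _ = ∑ i, ∑ j, (inner ℂ (e i) ((K (z i) (z j)) (e j)) : ℂ) := by
          rw [hv, sum_inner]
          refine Finset.sum_congr rfl fun i _ => ?_
          rw [inner_sum]
          exact Finset.sum_congr rfl fun j _ => (hterm i j).symm
end

section
/- Let Ω be a set and k : Ω × Ω → ℂ a positive kernel such that k(z,z) < 1 (as a real number) for every z ∈ Ω. Then |k(z,w)| < 1 for all z, w ∈ Ω, and the function (z,w) ↦ (1 − k(z,w))⁻¹ is again a positive kernel on Ω. -/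
open scoped ComplexOrder

section aux
variable {Ω : Type*} {k : Ω → Ω → ℂ}

lemma kernel_diag_nonneg (hk : IsPositiveKernel k) (z : Ω) : 0 ≤ k z z := by
  have := hk 1 ![z] ![1]
  simpa using this

lemma kernel_herm (hk : IsPositiveKernel k) (z w : Ω) :
    k w z = (starRingEnd ℂ) (k z w) := by
  have h1 := hk 2 ![z, w] ![1, 1]
  have h2 := hk 2 ![z, w] ![1, Complex.I]
  rw [Complex.le_def] at h1 h2
  simp [Fin.sum_univ_two, Complex.add_im, Complex.mul_im] at h1 h2
  have hz := kernel_diag_nonneg hk z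
  have hw := kernel_diag_nonneg hk w
  simp [Complex.le_def] at hz hw
  apply Complex.ext <;> simp [Complex.conj_re, Complex.conj_im] <;> linarith [h1.2, h2.2, hz.2, hw.2]
end aux

section aux2
variable {Ω : Type*} {k : Ω → Ω → ℂ}

lemma kernel_psd_matrix (hk : IsPositiveKernel k) {n : ℕ} (z : Fin n → Ω) :
    Matrix.PosSemidef (Matrix.of fun i j => k (z i) (z j)) := by
  refine Matrix.PosSemidef.of_dotProduct_mulVec_nonneg ?_ ?_
  · ext i j
    simpa [Matrix.conjTranspose_apply] using (kernel_herm hk (z j) (z i)).symm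
  · intro x
    have h := hk n z (star x)
    convert h using 1
    simp only [dotProduct, Matrix.mulVec, Matrix.of_apply, Pi.star_apply,
      Finset.mul_sum, RCLike.star_def]
    refine Finset.sum_congr rfl fun i _ => Finset.sum_congr rfl fun j _ => ?_
    simp; ring

lemma kernel_mul {k₂ : Ω → Ω → ℂ} (h1 : IsPositiveKernel k) (h2 : IsPositiveKernel k₂) :
    IsPositiveKernel (fun z w => k z w * k₂ z w) := by
  intro n z c
  obtain ⟨B, hB⟩ : ∃ B : Matrix (Fin n) (Fin n) ℂ,
      Matrix.of (fun i j => k (z i) (z j)) = B.conjTranspose * B := by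
    open scoped MatrixOrder Matrix.Norms.L2Operator in
    exact CStarAlgebra.nonneg_iff_eq_star_mul_self.mp (kernel_psd_matrix h1 z).nonneg
  have hBij : ∀ i j, k (z i) (z j) = ∑ a, (starRingEnd ℂ) (B a i) * B a j := by
    intro i j
    have h := congrFun (congrFun hB i) j
    simpa [Matrix.mul_apply, Matrix.conjTranspose_apply] using h
  have key : (∑ i, ∑ j, c i * (starRingEnd ℂ) (c j) * (k (z i) (z j) * k₂ (z i) (z j)))
      = ∑ a, ∑ i, ∑ j, (c i * (starRingEnd ℂ) (B a i)) *
          (starRingEnd ℂ) (c j * (starRingEnd ℂ) (B a j)) * k₂ (z i) (z j) := by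
    have swap : ∀ f : Fin n → Fin n → Fin n → ℂ,
        ∑ i, ∑ j, ∑ a, f i j a = ∑ a, ∑ i, ∑ j, f i j a := fun f =>
      (Finset.sum_congr rfl fun i _ => Finset.sum_comm).trans Finset.sum_comm
    simp_rw [hBij, Finset.sum_mul, Finset.mul_sum]
    rw [swap]
    refine Finset.sum_congr rfl fun a _ => Finset.sum_congr rfl fun i _ =>
      Finset.sum_congr rfl fun j _ => ?_
    simp only [map_mul, RingHomCompTriple.comp_apply, RingHom.id_apply, Complex.conj_conj]
    ring
  rw [key]
  exact Finset.sum_nonneg fun a _ => h2 n z fun i => c i * (starRingEnd ℂ) (B a i)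

lemma kernel_one : IsPositiveKernel (fun _ _ : Ω => 1) := by
  intro n z c
  have : (∑ i, ∑ j, c i * (starRingEnd ℂ) (c j) * 1)
      = (∑ i, c i) * (starRingEnd ℂ) (∑ i, c i) := by
    rw [map_sum, Finset.sum_mul_sum]; simp
  rw [this, Complex.mul_conj]
  simpa using Complex.normSq_nonneg _

lemma kernel_pow (hk : IsPositiveKernel k) (m : ℕ) :
    IsPositiveKernel (fun z w => (k z w) ^ m) := by
  induction m with
  | zero => simpa using kernel_one
  | succ m ih => simpa [pow_succ] using kernel_mul ih hk
end aux2

section aux3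
variable {Ω : Type*} {k : Ω → Ω → ℂ}

lemma kernel_abs_lt_one (hk : IsPositiveKernel k) (hdiag : ∀ z : Ω, k z z < 1) (z w : Ω) :
    ‖k z w‖ < 1 := by
  have hz := kernel_diag_nonneg hk z
  have hw := kernel_diag_nonneg hk w
  have hz1 := hdiag z
  have hw1 := hdiag w
  simp [Complex.le_def] at hz hw
  simp [Complex.lt_def] at hz1 hw1
  have hherm := kernel_herm hk z w
  set a := k z w with ha
  have hq : ∀ t : ℝ, 0 ≤ (k w w).re * (t * t) +
      (-(2 * Complex.normSq a)) * t + Complex.normSq a * (k z z).re := by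
    intro t
    have h := hk 2 ![z, w] ![(starRingEnd ℂ) a, (-t : ℂ)]
    rw [Complex.le_def] at h
    have h1 := h.1
    simp [Fin.sum_univ_two, hherm, Complex.add_re, Complex.mul_re, Complex.mul_im,
      Complex.normSq_apply] at h1 ⊢
    nlinarith [h1, hz.2, hw.2]
  have hd := discrim_le_zero hq
  rw [discrim] at hd
  have hns : Complex.normSq a ≤ (k w w).re * (k z z).re ∨ Complex.normSq a = 0 := by
    rcases eq_or_lt_of_le (Complex.normSq_nonneg a) with h0 | h0
    · exact Or.inr h0.symm
    · left; nlinarith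
  have habs : ‖a‖ ^ 2 = Complex.normSq a := Complex.sq_norm a
  rcases hns with h | h
  · have hlt : Complex.normSq a < 1 := by nlinarith [hz1.1, hw1.1, hz.1, hw.1]
    nlinarith [norm_nonneg a, habs]
  · have h0 : a = 0 := Complex.normSq_eq_zero.mp h
    simp [h0]
end aux3

/-- If `k` is a positive kernel whose (nonnegative real) diagonal values satisfy
`k(z,z) < 1`, then `|k(z,w)| < 1` everywhere and `(1 - k(z,w))⁻¹` is again a positive
kernel. -/
theorem stmt9 {Ω : Type*} (k : Ω → Ω → ℂ) (hk : IsPositiveKernel k)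
    (hdiag : ∀ z : Ω, k z z < 1) :
    (∀ z w : Ω, ‖k z w‖ < 1) ∧
      IsPositiveKernel (fun z w => (1 - k z w)⁻¹) := by
  have habs : ∀ z w : Ω, ‖k z w‖ < 1 := kernel_abs_lt_one hk hdiag
  refine ⟨habs, ?_⟩
  intro n z c
  have hnorm : ∀ i j : Fin n, ‖k (z i) (z j)‖ < 1 := fun i j => by
    simpa using habs (z i) (z j)
  have hsum : ∀ i j : Fin n,
      Summable (fun m : ℕ => c i * (starRingEnd ℂ) (c j) * k (z i) (z j) ^ m) :=
    fun i j => (summable_geometric_of_norm_lt_one (hnorm i j)).mul_left _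
  have key : (∑ i, ∑ j, c i * (starRingEnd ℂ) (c j) * (1 - k (z i) (z j))⁻¹)
      = ∑' m : ℕ, ∑ i, ∑ j, c i * (starRingEnd ℂ) (c j) * k (z i) (z j) ^ m := by
    symm
    calc (∑' m : ℕ, ∑ i, ∑ j, c i * (starRingEnd ℂ) (c j) * k (z i) (z j) ^ m)
        = ∑ i, ∑' m : ℕ, ∑ j, c i * (starRingEnd ℂ) (c j) * k (z i) (z j) ^ m :=
          Summable.tsum_finsetSum fun i _ => summable_sum fun j _ => hsum i j
      _ = ∑ i, ∑ j, ∑' m : ℕ, c i * (starRingEnd ℂ) (c j) * k (z i) (z j) ^ m :=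
          Finset.sum_congr rfl fun i _ => Summable.tsum_finsetSum fun j _ => hsum i j
      _ = ∑ i, ∑ j, c i * (starRingEnd ℂ) (c j) * (1 - k (z i) (z j))⁻¹ :=
          Finset.sum_congr rfl fun i _ => Finset.sum_congr rfl fun j _ => by
            rw [tsum_mul_left, tsum_geometric_of_norm_lt_one (hnorm i j)]
  rw [key]
  exact tsum_nonneg fun m => kernel_pow hk m n z c
end

section
/- Let X, U, Y be complex Hilbert spaces and let A : X → X, B : U → X, C : X → Y, D : U → Y be bounded operators satisfying the coisometry relations A∘A* + B∘B* = I_X, A∘C* + B∘D* = 0, and C∘C* + D∘D* = I_Y (i.e., the block operator [[A,B],[C,D]] : X ⊕ U → X ⊕ Y satisfies UU* = I). Let P, Q be bounded operators on X such that I − P∘A and I − Q∘A are invertible, and set S_P := D + C∘(I − P∘A)⁻¹∘P∘B and S_Q := D + C∘(I − Q∘A)⁻¹∘Q∘B. Then I_Y − S_P ∘ S_Q* = C ∘ (I − P∘A)⁻¹ ∘ (I − P∘Q*) ∘ ((I − Q∘A)⁻¹)* ∘ C*. -/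
open ContinuousLinearMap
set_option maxHeartbeats 2000000

private lemma my_one_comp {E F : Type*} [NormedAddCommGroup E] [NormedAddCommGroup F]
    [NormedSpace ℂ E] [NormedSpace ℂ F] (f : E →L[ℂ] F) :
    (1 : F →L[ℂ] F).comp f = f := by
  rw [ContinuousLinearMap.one_def, ContinuousLinearMap.id_comp]

private lemma my_comp_one {E F : Type*} [NormedAddCommGroup E] [NormedAddCommGroup F]
    [NormedSpace ℂ E] [NormedSpace ℂ F] (f : E →L[ℂ] F) :
    f.comp (1 : E →L[ℂ] E) = f := by
  rw [ContinuousLinearMap.one_def, ContinuousLinearMap.comp_id]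

/-- The basic identity behind transfer-function realizations: if the block operator
`[[A,B],[C,D]] : X ⊕ U → X ⊕ Y` is a coisometry (`U U* = I`), and
`S_P = D + C (I - P A)⁻¹ P B`, `S_Q = D + C (I - Q A)⁻¹ Q B`, then
`I - S_P S_Q* = C (I - P A)⁻¹ (I - P Q*) ((I - Q A)⁻¹)* C*`. -/
theorem stmt11 {X U Y : Type*}
    [NormedAddCommGroup X] [InnerProductSpace ℂ X] [CompleteSpace X]
    [NormedAddCommGroup U] [InnerProductSpace ℂ U] [CompleteSpace U]
    [NormedAddCommGroup Y] [InnerProductSpace ℂ Y] [CompleteSpace Y]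
    (A : X →L[ℂ] X) (B : U →L[ℂ] X) (C : X →L[ℂ] Y) (D : U →L[ℂ] Y)
    (h1 : A.comp (adjoint A) + B.comp (adjoint B) = 1)
    (h2 : A.comp (adjoint C) + B.comp (adjoint D) = 0)
    (h3 : C.comp (adjoint C) + D.comp (adjoint D) = 1)
    (P Q : X →L[ℂ] X)
    (hP : IsUnit ((1 : X →L[ℂ] X) - P * A)) (hQ : IsUnit ((1 : X →L[ℂ] X) - Q * A)) :
    (1 : Y →L[ℂ] Y) -
        (D + C.comp ((Ring.inverse ((1 : X →L[ℂ] X) - P * A)).comp (P.comp B))).comp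
          (adjoint (D + C.comp ((Ring.inverse ((1 : X →L[ℂ] X) - Q * A)).comp
            (Q.comp B)))) =
      C.comp ((Ring.inverse ((1 : X →L[ℂ] X) - P * A)).comp
        (((1 : X →L[ℂ] X) - P.comp (adjoint Q)).comp
          ((adjoint (Ring.inverse ((1 : X →L[ℂ] X) - Q * A))).comp (adjoint C)))) := by
  set eP := Ring.inverse ((1:X→L[ℂ]X) - P*A) with heP
  set eQ := Ring.inverse ((1:X→L[ℂ]X) - Q*A) with heQ
  set eQ' := adjoint eQ with heQ'
  have a1 : adjoint (1 : X→L[ℂ]X) = 1 := by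
    rw [ContinuousLinearMap.one_def, adjoint_id]
  -- coisometry relations
  have hDD : D.comp (adjoint D) = 1 - C.comp (adjoint C) := by
    rw [← h3]; abel
  have hBB : B.comp (adjoint B) = 1 - A.comp (adjoint A) := by
    rw [← h1]; abel
  have hBD : B.comp (adjoint D) = -(A.comp (adjoint C)) :=
    eq_neg_of_add_eq_zero_right h2
  have hDB : D.comp (adjoint B) = -(C.comp (adjoint A)) := by
    have := congrArg ContinuousLinearMap.adjoint h2
    rw [map_add, map_zero] at this
    simp only [adjoint_comp, adjoint_adjoint] at this
    rw [eq_neg_iff_add_eq_zero, add_comm]; exact this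
  -- ring identity in X →L X
  have e1 : eP * (1 - P*A) = 1 := Ring.inverse_mul_cancel _ hP
  have e2 : (1 - adjoint A * adjoint Q) * eQ' = 1 := by
    have := congrArg ContinuousLinearMap.adjoint (Ring.inverse_mul_cancel _ hQ)
    simp only [mul_def, adjoint_comp, a1] at this
    rw [heQ', heQ]; simpa [mul_def, a1] using this
  have hM : (1 : X→L[ℂ]X) + adjoint A * adjoint Q * eQ' + eP * P * A
      - eP * P * (1 - A * adjoint A) * adjoint Q * eQ'
      = eP * (1 - P * adjoint Q) * eQ' := by
    symm
    calc eP * (1 - P * adjoint Q) * eQ'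
        = (eP * (1 - P*A)) * ((1 - adjoint A * adjoint Q) * eQ')
          + (eP * (1 - P*A)) * (adjoint A * adjoint Q * eQ')
          + (eP * P * A) * ((1 - adjoint A * adjoint Q) * eQ')
          - eP * P * (1 - A * adjoint A) * adjoint Q * eQ' := by noncomm_ring
      _ = _ := by rw [e1, e2]; noncomm_ring
  -- expand the product S_P S_Q*
  have expand : (D + C.comp (eP.comp (P.comp B))).comp
      (adjoint (D + C.comp (eQ.comp (Q.comp B))))
      = D.comp (adjoint D)
        + D.comp ((adjoint B).comp ((adjoint Q).comp (eQ'.comp (adjoint C))))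
        + C.comp (eP.comp (P.comp (B.comp (adjoint D))))
        + C.comp (eP.comp (P.comp (B.comp ((adjoint B).comp
            ((adjoint Q).comp (eQ'.comp (adjoint C))))))) := by
    simp only [map_add, adjoint_comp, add_comp, comp_add, comp_assoc, ← heQ']
    abel
  rw [expand]
  -- substitute the coisometry relations
  have t2 : D.comp ((adjoint B).comp ((adjoint Q).comp (eQ'.comp (adjoint C))))
      = -(C.comp ((adjoint A).comp ((adjoint Q).comp (eQ'.comp (adjoint C))))) := by
    rw [← comp_assoc, hDB, neg_comp, comp_assoc]
  have t4 : B.comp ((adjoint B).comp ((adjoint Q).comp (eQ'.comp (adjoint C))))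
      = (adjoint Q).comp (eQ'.comp (adjoint C))
        - A.comp ((adjoint A).comp ((adjoint Q).comp (eQ'.comp (adjoint C)))) := by
    rw [← comp_assoc, hBB, sub_comp, my_one_comp, comp_assoc]
  rw [hDD, hBD, t2, t4]
  -- reduce to the ring identity
  have goal2 : (1 : Y →L[ℂ] Y) -
      ((1 - C.comp (adjoint C))
        + -(C.comp ((adjoint A).comp ((adjoint Q).comp (eQ'.comp (adjoint C)))))
        + C.comp (eP.comp (P.comp (-(A.comp (adjoint C)))))
        + C.comp (eP.comp (P.comp ((adjoint Q).comp (eQ'.comp (adjoint C))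
            - A.comp ((adjoint A).comp ((adjoint Q).comp (eQ'.comp (adjoint C))))))))
      = C.comp ((((1 : X→L[ℂ]X) + adjoint A * adjoint Q * eQ' + eP * P * A
          - eP * P * (1 - A * adjoint A) * adjoint Q * eQ')).comp (adjoint C)) := by
    simp only [mul_def, add_comp, sub_comp, comp_add, comp_sub, comp_neg, neg_comp,
      my_one_comp, my_comp_one, comp_assoc]
    abel
  rw [goal2, hM]
  simp only [mul_def, comp_assoc]
end

section
/- Let K be a complex Hilbert space and F a bounded operator on K such that F + F* is a positive operator. Then F + I is invertible, and the operator σ := (F + I)⁻¹ ∘ (F − I) satisfies I − σ∘σ* = 2·(F + I)⁻¹ ∘ (F + F*) ∘ ((F + I)⁻¹)*; in particular ‖σ‖ ≤ 1. -/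
open scoped ComplexOrder

/-- A bounded operator on a complex Hilbert space is positive: `⟪T x, x⟫ ≥ 0` for all
`x` (written with the inner product linear in its second slot). -/
def IsPosOp {K : Type*} [NormedAddCommGroup K] [InnerProductSpace ℂ K]
    (T : K →L[ℂ] K) : Prop :=
  ∀ x : K, 0 ≤ (inner ℂ x (T x) : ℂ)

/-- Lower bound: if `re ⟪A x, x⟫ ≥ 0` for all `x`, then `‖x‖ ≤ ‖(A + 1) x‖`. -/
lemma aux_lower {K : Type*} [NormedAddCommGroup K] [InnerProductSpace ℂ K]
    (A : K →L[ℂ] K) (h : ∀ x : K, 0 ≤ (inner ℂ (A x) x : ℂ).re) (x : K) :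
    ‖x‖ ≤ ‖(A + 1) x‖ := by
  have h1 := norm_add_sq (𝕜 := ℂ) (A x) x
  simp only [RCLike.re_to_complex] at h1
  have h2 : (A + 1) x = A x + x := by
    simp [ContinuousLinearMap.add_apply]
  rw [h2]
  nlinarith [h x, norm_nonneg (A x + x), norm_nonneg x, norm_nonneg (A x)]

/-- If `F + F*` is a positive operator then `F + I` is invertible, and the Cayley
transform `σ = (F + I)⁻¹ (F - I)` satisfies
`I - σ σ* = 2 (F + I)⁻¹ (F + F*) ((F + I)⁻¹)*`; in particular `‖σ‖ ≤ 1`. -/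
theorem stmt15 {K : Type*} [NormedAddCommGroup K] [InnerProductSpace ℂ K]
    [CompleteSpace K] (F : K →L[ℂ] K) (hF : IsPosOp (F + star F)) :
    IsUnit (F + (1 : K →L[ℂ] K)) ∧
    (1 : K →L[ℂ] K) -
        (Ring.inverse (F + 1) * (F - 1)) * star (Ring.inverse (F + 1) * (F - 1)) =
      (2 : ℂ) • (Ring.inverse (F + 1) * (F + star F) * star (Ring.inverse (F + 1))) ∧
    ‖Ring.inverse (F + 1) * (F - 1)‖ ≤ 1 := by
  -- real part positivity
  have hre : ∀ x : K, 0 ≤ (inner ℂ (F x) x : ℂ).re := by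
    intro x
    have h := hF x
    rw [Complex.le_def] at h
    have hx : (inner ℂ x ((F + star F) x) : ℂ)
        = (inner ℂ x (F x) : ℂ) + (inner ℂ (F x) x : ℂ) := by
      rw [ContinuousLinearMap.add_apply, inner_add_right,
        ContinuousLinearMap.star_eq_adjoint, ContinuousLinearMap.adjoint_inner_right]
    rw [hx] at h
    have hc : (inner ℂ x (F x) : ℂ) = starRingEnd ℂ (inner ℂ (F x) x : ℂ) :=
      (inner_conj_symm x (F x)).symm
    have h1 := h.1
    rw [hc] at h1
    simp only [Complex.add_re, Complex.conj_re, Complex.zero_re] at h1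
    linarith
  have hrestar : ∀ x : K, 0 ≤ (inner ℂ ((star F) x) x : ℂ).re := by
    intro x
    have : (inner ℂ ((star F) x) x : ℂ) = starRingEnd ℂ (inner ℂ (F x) x : ℂ) := by
      rw [ContinuousLinearMap.star_eq_adjoint, ContinuousLinearMap.adjoint_inner_left]
      exact (inner_conj_symm x (F x)).symm
    rw [this, Complex.conj_re]
    exact hre x
  have hlow : ∀ x : K, ‖x‖ ≤ ‖(F + 1) x‖ := aux_lower F hre
  have hlowS : ∀ x : K, ‖x‖ ≤ ‖(star F + 1) x‖ := aux_lower (star F) hrestar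
  -- invertibility
  have hu : IsUnit (F + (1 : K →L[ℂ] K)) := by
    rw [ContinuousLinearMap.isUnit_iff_bijective]
    refine ⟨?_, ?_⟩
    · intro a b hab
      have : ‖a - b‖ ≤ ‖(F + (1 : K →L[ℂ] K)) (a - b)‖ := hlow _
      rw [map_sub, hab, sub_self, norm_zero] at this
      have := le_antisymm this (norm_nonneg _)
      rwa [norm_eq_zero, sub_eq_zero] at this
    · -- surjectivity
      have hanti : AntilipschitzWith 1 (F + 1 : K →L[ℂ] K) := by
        apply ContinuousLinearMap.antilipschitz_of_bound
        intro x
        simpa using hlow x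
      have hclosed : IsClosed (Set.range (F + 1 : K →L[ℂ] K)) :=
        hanti.isClosed_range (F + 1).uniformContinuous
      have hclosed' : IsClosed ((LinearMap.range ((F + 1 : K →L[ℂ] K) : K →ₗ[ℂ] K) : Submodule ℂ K) : Set K) := by
        rwa [LinearMap.coe_range]
      haveI : CompleteSpace (LinearMap.range ((F + 1 : K →L[ℂ] K) : K →ₗ[ℂ] K) : Submodule ℂ K) :=
        hclosed'.completeSpace_coe
      have horth : (LinearMap.range ((F + 1 : K →L[ℂ] K) : K →ₗ[ℂ] K) : Submodule ℂ K)ᗮ = ⊥ := by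
        rw [Submodule.eq_bot_iff]
        intro y hy
        rw [Submodule.mem_orthogonal] at hy
        have hz : (star (F + 1)) y = 0 := by
          rw [ContinuousLinearMap.star_eq_adjoint]
          apply (inner_self_eq_zero (𝕜 := ℂ)).mp
          rw [ContinuousLinearMap.adjoint_inner_right]
          exact hy _ (LinearMap.mem_range_self _ _)
        have hsFI : star (F + (1 : K →L[ℂ] K)) = star F + 1 := by
          rw [star_add, star_one]
        rw [hsFI] at hz
        have := hlowS y
        rw [hz, norm_zero] at this
        exact norm_eq_zero.mp (le_antisymm this (norm_nonneg _))
      have hrange : LinearMap.range ((F + 1 : K →L[ℂ] K) : K →ₗ[ℂ] K) = (⊤ : Submodule ℂ K) :=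
        Submodule.orthogonal_eq_bot_iff.mp horth
      exact LinearMap.range_eq_top.mp hrange
  set G : K →L[ℂ] K := Ring.inverse (F + 1) with hG
  have hGl : G * (F + 1) = 1 := Ring.inverse_mul_cancel _ hu
  have hGr : (F + 1) * G = 1 := Ring.mul_inverse_cancel _ hu
  set S : K →L[ℂ] K := star G with hS
  have hSl : (star F + 1) * S = 1 := by
    have := congrArg star hGl
    simpa [star_mul, star_add, star_one] using this
  have hcomm : G * (F - 1) = (F - 1) * G := by
    calc G * (F - 1) = G * (F - 1) * ((F + 1) * G) := by rw [hGr, mul_one]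
      _ = G * ((F - 1) * (F + 1)) * G := by noncomm_ring
      _ = G * ((F + 1) * (F - 1)) * G := by
          have h : (F - 1) * (F + 1) = (F + 1) * (F - 1) := by noncomm_ring
          rw [h]
      _ = (G * (F + 1)) * ((F - 1) * G) := by noncomm_ring
      _ = (F - 1) * G := by rw [hGl, one_mul]
  refine ⟨hu, ?_, ?_⟩
  · -- the algebraic identity
    have hσ : G * (F - 1) = 1 - 2 * G := by
      calc G * (F - 1) = G * (F + 1) - (G + G) := by noncomm_ring
        _ = 1 - 2 * G := by rw [hGl]; noncomm_ring
    have hstσ : star (G * (F - 1)) = 1 - 2 * S := by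
      rw [hσ, star_sub, star_mul, star_one]
      rw [show ((2 : K →L[ℂ] K)) = (1 : K →L[ℂ] K) + 1 by norm_num, star_add, star_one, hS]
      noncomm_ring
    have key : G * (F + star F) * S = G + S - (G * S + G * S) := by
      calc G * (F + star F) * S
          = (G * (F + 1)) * S + G * ((star F + 1) * S) - (G * S + G * S) := by noncomm_ring
        _ = G + S - (G * S + G * S) := by rw [hGl, hSl]; noncomm_ring
    rw [hstσ, hσ, key, two_smul]
    noncomm_ring
  · -- the norm bound
    apply ContinuousLinearMap.opNorm_le_bound _ zero_le_one
    intro x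
    rw [one_mul]
    have h1 : (G * (F - 1)) x = (F - 1) (G x) := by
      rw [hcomm]; rfl
    have h2 : (F + 1) (G x) = x := by
      have := DFunLike.congr_fun hGr x
      simpa using this
    rw [h1]
    have h3 : ‖(F - 1) (G x)‖ ≤ ‖(F + 1) (G x)‖ := by
      have ha := norm_add_sq (𝕜 := ℂ) (F (G x)) (G x)
      have hb := norm_sub_sq (𝕜 := ℂ) (F (G x)) (G x)
      simp only [RCLike.re_to_complex] at ha hb
      have hc : (F - 1) (G x) = F (G x) - G x := by
        simp [ContinuousLinearMap.sub_apply]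
      have hd : (F + 1) (G x) = F (G x) + G x := by
        simp [ContinuousLinearMap.add_apply]
      rw [hc, hd]
      nlinarith [hre (G x), norm_nonneg (F (G x) + G x), norm_nonneg (F (G x) - G x)]
    calc ‖(F - 1) (G x)‖ ≤ ‖(F + 1) (G x)‖ := h3
      _ = ‖x‖ := by rw [h2]
end

section
/- Let N ≥ 1 and let S : 𝔻 → M_N(ℂ) be holomorphic on 𝔻 with I_N − S(z)ᴴ·S(z) positive semidefinite for every z ∈ 𝔻, S(0) = 0, and derivative of S at 0 equal to 0. Then for every z ∈ 𝔻 the matrix I_N − S(z) is invertible, and the function F(z) := (I_N − S(z))⁻¹·(I_N + S(z)) is holomorphic on 𝔻 and satisfies: F(z) + F(z)ᴴ is positive semidefinite for all z ∈ 𝔻, F(0) = I_N, and the derivative of F at 0 is 0. -/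
open Metric Matrix
open scoped ComplexOrder

attribute [local instance] Matrix.normedAddCommGroup Matrix.normedSpace

namespace Stmt17Aux

variable {N : ℕ}

lemma mat_hasDerivAt_iff {f : ℂ → Matrix (Fin N) (Fin N) ℂ}
    {f' : Matrix (Fin N) (Fin N) ℂ} {x : ℂ} :
    HasDerivAt f f' x ↔ ∀ i j, HasDerivAt (fun z => f z i j) (f' i j) x := by
  constructor
  · intro h i j; exact hasDerivAt_pi.1 (hasDerivAt_pi.1 h i) j
  · intro h; exact hasDerivAt_pi.2 fun i => hasDerivAt_pi.2 fun j => h i j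

lemma mat_dwa_iff {f : ℂ → Matrix (Fin N) (Fin N) ℂ} {s : Set ℂ} {x : ℂ} :
    DifferentiableWithinAt ℂ f s x ↔
      ∀ i j, DifferentiableWithinAt ℂ (fun z => f z i j) s x := by
  constructor
  · intro h i j; exact differentiableWithinAt_pi.1 (differentiableWithinAt_pi.1 h i) j
  · intro h
    exact differentiableWithinAt_pi.2 fun i => differentiableWithinAt_pi.2 fun j => h i j

lemma hasDerivAt_matmul {f g : ℂ → Matrix (Fin N) (Fin N) ℂ}
    {f' g' : Matrix (Fin N) (Fin N) ℂ} {x : ℂ}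
    (hf : HasDerivAt f f' x) (hg : HasDerivAt g g' x) :
    HasDerivAt (fun z => f z * g z) (f' * g x + f x * g') x := by
  rw [mat_hasDerivAt_iff] at hf hg ⊢
  intro i j
  have h : HasDerivAt (fun z => ∑ k, f z i k * g z k j)
      (∑ k, (f' i k * g x k j + f x i k * g' k j)) x :=
    HasDerivAt.fun_sum fun k _ => (hf i k).mul (hg k j)
  simpa only [Matrix.mul_apply, Matrix.add_apply, Finset.sum_add_distrib] using h

lemma dwa_matmul {f g : ℂ → Matrix (Fin N) (Fin N) ℂ} {s : Set ℂ} {x : ℂ}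
    (hf : DifferentiableWithinAt ℂ f s x) (hg : DifferentiableWithinAt ℂ g s x) :
    DifferentiableWithinAt ℂ (fun z => f z * g z) s x := by
  rw [mat_dwa_iff] at hf hg ⊢
  intro i j
  simp only [Matrix.mul_apply]
  exact DifferentiableWithinAt.fun_sum fun k _ => (hf i k).mul (hg k j)

lemma dwa_det {f : ℂ → Matrix (Fin N) (Fin N) ℂ} {s : Set ℂ} {x : ℂ}
    (hf : DifferentiableWithinAt ℂ f s x) :
    DifferentiableWithinAt ℂ (fun z => (f z).det) s x := by
  rw [mat_dwa_iff] at hf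
  simp only [Matrix.det_apply, Units.smul_def, zsmul_eq_mul]
  exact DifferentiableWithinAt.fun_sum fun σ _ =>
    (DifferentiableWithinAt.fun_finset_prod fun i _ => hf (σ i) i).const_mul _

lemma don_inv {f : ℂ → Matrix (Fin N) (Fin N) ℂ} {s : Set ℂ}
    (hf : DifferentiableOn ℂ f s) (hu : ∀ z ∈ s, IsUnit (f z)) :
    DifferentiableOn ℂ (fun z => (f z)⁻¹) s := by
  intro x hx
  rw [mat_dwa_iff]
  intro i j
  have hdet : DifferentiableWithinAt ℂ (fun z => (f z).det) s x := dwa_det (hf x hx)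
  have hdetne : (f x).det ≠ 0 :=
    ((Matrix.isUnit_iff_isUnit_det _).1 (hu x hx)).ne_zero
  have hadj : DifferentiableWithinAt ℂ
      (fun z => ((f z).updateRow j (Pi.single i 1)).det) s x := by
    apply dwa_det
    rw [mat_dwa_iff]
    intro a b
    simp only [Matrix.updateRow_apply]
    split_ifs
    · exact differentiableWithinAt_const _
    · exact mat_dwa_iff.1 (hf x hx) a b
  have key : ∀ z, (f z)⁻¹ i j = ((f z).det)⁻¹ * ((f z).updateRow j (Pi.single i 1)).det := by
    intro z
    rw [Matrix.inv_def, Matrix.smul_apply, Matrix.adjugate_apply, Ring.inverse_eq_inv,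
      smul_eq_mul]
  exact DifferentiableWithinAt.congr ((hdet.inv hdetne).mul hadj) (fun z _ => key z) (key x)

lemma comm_inv {T : Matrix (Fin N) (Fin N) ℂ} (h : IsUnit (1 - T)) :
    (1 - T)⁻¹ * (1 + T) = (1 + T) * (1 - T)⁻¹ := by
  have hd : IsUnit (1 - T).det := (Matrix.isUnit_iff_isUnit_det _).1 h
  have comm : (1 - T) * (1 + T) = (1 + T) * (1 - T) := by noncomm_ring
  calc (1 - T)⁻¹ * (1 + T)
      = (1 - T)⁻¹ * ((1 + T) * ((1 - T) * (1 - T)⁻¹)) := by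
        rw [Matrix.mul_nonsing_inv _ hd, mul_one]
    _ = (1 - T)⁻¹ * (((1 + T) * (1 - T)) * (1 - T)⁻¹) := by rw [Matrix.mul_assoc]
    _ = (1 - T)⁻¹ * (((1 - T) * (1 + T)) * (1 - T)⁻¹) := by rw [comm]
    _ = ((1 - T)⁻¹ * (1 - T)) * ((1 + T) * (1 - T)⁻¹) := by
        rw [Matrix.mul_assoc, Matrix.mul_assoc]
    _ = (1 + T) * (1 - T)⁻¹ := by rw [Matrix.nonsing_inv_mul _ hd, one_mul]

end Stmt17Aux

theorem EuclideanSpace.inner_piLp_equiv_symm {n : ℕ} (x y : Fin n → ℂ) :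
    inner ℂ ((WithLp.equiv 2 (Fin n → ℂ)).symm x) ((WithLp.equiv 2 (Fin n → ℂ)).symm y)
      = dotProduct (star x) y := by
  rw [EuclideanSpace.inner_eq_star_dotProduct, dotProduct_comm]; rfl

open Stmt17Aux

/-- The Cayley transform `F = (I - S)⁻¹ (I + S)` of a matrix Schur-class function `S` on
the unit disk with `S(0) = 0` and `S'(0) = 0` is a normalized constrained matrix Herglotz
function: `F` is holomorphic, `F(z) + F(z)ᴴ ⪰ 0`, `F(0) = I`, and `F'(0) = 0`. -/
theorem stmt17 (N : ℕ) (hN : 1 ≤ N) (S : ℂ → Matrix (Fin N) (Fin N) ℂ)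
    (hol : DifferentiableOn ℂ S (ball (0 : ℂ) 1))
    (hcontr : ∀ z ∈ ball (0 : ℂ) 1, ((1 : Matrix (Fin N) (Fin N) ℂ) - (S z)ᴴ * S z).PosSemidef)
    (h0 : S 0 = 0) (hder : HasDerivAt S (0 : Matrix (Fin N) (Fin N) ℂ) 0) :
    (∀ z ∈ ball (0 : ℂ) 1, IsUnit ((1 : Matrix (Fin N) (Fin N) ℂ) - S z)) ∧
    DifferentiableOn ℂ (fun z : ℂ => (1 - S z)⁻¹ * (1 + S z)) (ball (0 : ℂ) 1) ∧
    (∀ z ∈ ball (0 : ℂ) 1,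
      (((1 - S z)⁻¹ * (1 + S z)) + ((1 - S z)⁻¹ * (1 + S z))ᴴ).PosSemidef) ∧
    (1 - S 0)⁻¹ * (1 + S 0) = (1 : Matrix (Fin N) (Fin N) ℂ) ∧
    HasDerivAt (fun z : ℂ => (1 - S z)⁻¹ * (1 + S z))
      (0 : Matrix (Fin N) (Fin N) ℂ) 0 := by
  -- Step 1: invertibility of `1 - S z` on the ball
  have hunit : ∀ z ∈ ball (0 : ℂ) 1, IsUnit ((1 : Matrix (Fin N) (Fin N) ℂ) - S z) := by
    intro z hz
    rw [Matrix.isUnit_iff_isUnit_det, isUnit_iff_ne_zero]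
    intro hdet
    obtain ⟨v, hv0, hvz⟩ := (Matrix.exists_mulVec_eq_zero_iff).2 hdet
    have hSv : S z *ᵥ v = v := by
      have h1 : (1 : Matrix (Fin N) (Fin N) ℂ) *ᵥ v - S z *ᵥ v = 0 := by
        rwa [← Matrix.sub_mulVec]
      rw [Matrix.one_mulVec] at h1
      exact (sub_eq_zero.1 h1).symm
    have hz0 : z ≠ 0 := by
      rintro rfl
      rw [h0, Matrix.zero_mulVec] at hSv
      exact hv0 hSv.symm
    -- Euclidean space set-up
    set V : EuclideanSpace ℂ (Fin N) := (WithLp.equiv 2 (Fin N → ℂ)).symm v with hV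
    have hV0 : V ≠ 0 := by
      intro h
      apply hv0
      have := congrArg (WithLp.equiv 2 (Fin N → ℂ)) h
      rw [hV] at this
      simpa using this
    set c : ℝ := ‖V‖ with hc
    have hcpos : 0 < c := norm_pos_iff.2 hV0
    set g : ℂ → ℂ := fun w => dotProduct (star v) (S w *ᵥ v) with hg
    -- bound |g w| ≤ c ^ 2 on the ball
    have hb : ∀ w ∈ ball (0 : ℂ) 1, ‖g w‖ ≤ c ^ 2 := by
      intro w hw
      set u : Fin N → ℂ := S w *ᵥ v with hu
      set U : EuclideanSpace ℂ (Fin N) := (WithLp.equiv 2 (Fin N → ℂ)).symm u with hU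
      have hgU : g w = inner ℂ V U := (EuclideanSpace.inner_piLp_equiv_symm v u).symm
      have hdot : dotProduct (star u) u ≤ dotProduct (star v) v := by
        have h1 := (hcontr w hw).dotProduct_mulVec_nonneg v
        rw [Matrix.sub_mulVec, Matrix.one_mulVec, dotProduct_sub, sub_nonneg] at h1
        have h2 : dotProduct (star v) (((S w)ᴴ * S w) *ᵥ v) = dotProduct (star u) u := by
          rw [← Matrix.mulVec_mulVec, Matrix.dotProduct_mulVec, ← Matrix.star_mulVec, hu]
        rwa [h2] at h1
      have hre : RCLike.re (dotProduct (star u) u) ≤ RCLike.re (dotProduct (star v) v) :=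
        (Complex.le_def.1 hdot).1
      have hUU : RCLike.re (inner (𝕜 := ℂ) U U) = ‖U‖ ^ 2 := by
        rw [inner_self_eq_norm_sq]
      have hVV : RCLike.re (inner (𝕜 := ℂ) V V) = ‖V‖ ^ 2 := by
        rw [inner_self_eq_norm_sq]
      have hUe : inner (𝕜 := ℂ) U U = dotProduct (star u) u :=
        EuclideanSpace.inner_piLp_equiv_symm u u
      have hVe : inner (𝕜 := ℂ) V V = dotProduct (star v) v :=
        EuclideanSpace.inner_piLp_equiv_symm v v
      have hUnorm : ‖U‖ ≤ ‖V‖ := by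
        have h3 : ‖U‖ ^ 2 ≤ ‖V‖ ^ 2 := by
          rw [← hUU, ← hVV, hUe, hVe]; exact hre
        nlinarith [norm_nonneg U, norm_nonneg V]
      calc ‖g w‖ = ‖inner (𝕜 := ℂ) V U‖ := by rw [hgU]
        _ ≤ ‖V‖ * ‖U‖ := norm_inner_le_norm V U
        _ ≤ ‖V‖ * ‖V‖ := by
            have := norm_nonneg V; nlinarith
        _ = c ^ 2 := by rw [hc]; ring
    -- value of g at z
    have hgz : ‖g z‖ = c ^ 2 := by
      have : g z = dotProduct (star v) v := by
        have e : g z = dotProduct (star v) (S z *ᵥ v) := rfl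
        rw [e, hSv]
      have hVe : inner (𝕜 := ℂ) V V = dotProduct (star v) v :=
        EuclideanSpace.inner_piLp_equiv_symm v v
      have h4 : inner (𝕜 := ℂ) V V = (‖V‖ : ℂ) ^ 2 := inner_self_eq_norm_sq_to_K V
      rw [this, ← hVe, h4]
      rw [hc]
      simp [← Complex.ofReal_pow]
    -- g is holomorphic on the ball
    have hgd : DifferentiableOn ℂ g (ball (0 : ℂ) 1) := by
      intro x hx
      have hS := mat_dwa_iff.1 (hol x hx)
      simp only [hg, dotProduct, Matrix.mulVec, dotProduct]
      exact DifferentiableWithinAt.fun_sum fun i _ =>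
        (DifferentiableWithinAt.fun_sum fun j _ => (hS i j).mul_const _).const_mul _
    have hg0 : g 0 = 0 := by simp [hg, h0]
    -- Schwarz lemma
    set a : ℝ := ‖z‖ with ha
    have ha0 : 0 < a := by
      rw [ha]; exact norm_pos_iff.2 hz0
    have ha1 : a < 1 := by
      rw [ha]
      simpa using mem_ball_zero_iff.1 hz
    set c' : ℝ := (c ^ 2 + c ^ 2 / a) / 2 with hc'
    have hcc1 : c ^ 2 < c' := by
      rw [hc']
      have : c ^ 2 < c ^ 2 / a := by
        rw [lt_div_iff₀ ha0]; nlinarith [pow_pos hcpos 2]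
      linarith
    have hcc2 : c' * a < c ^ 2 := by
      rw [hc']
      have : c ^ 2 / a * a = c ^ 2 := div_mul_cancel₀ _ ha0.ne'
      nlinarith
    have hmaps : Set.MapsTo g (ball (0 : ℂ) 1) (closedBall (g 0) c') := by
      intro w hw
      rw [hg0, mem_closedBall_zero_iff]
      calc ‖g w‖ = ‖g w‖ := rfl
        _ ≤ c ^ 2 := hb w hw
        _ ≤ c' := hcc1.le
    have hschwarz := Complex.dist_le_div_mul_dist_of_mapsTo_ball hgd hmaps hz
    rw [hg0, dist_zero_right, dist_zero_right] at hschwarz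
    have : c ^ 2 ≤ c' * a := by
      calc c ^ 2 = ‖g z‖ := hgz.symm
        _ = ‖g z‖ := rfl
        _ ≤ c' / 1 * ‖z‖ := hschwarz
        _ = c' * a := by rw [div_one]
    linarith
  -- Step 2: differentiability of F
  have hA : DifferentiableOn ℂ (fun z => (1 : Matrix (Fin N) (Fin N) ℂ) - S z)
      (ball (0 : ℂ) 1) := (differentiableOn_const _).sub hol
  have hGinv : DifferentiableOn ℂ (fun z => ((1 : Matrix (Fin N) (Fin N) ℂ) - S z)⁻¹)
      (ball (0 : ℂ) 1) := don_inv hA hunit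
  have h1S : DifferentiableOn ℂ (fun z => (1 : Matrix (Fin N) (Fin N) ℂ) + S z)
      (ball (0 : ℂ) 1) := (differentiableOn_const _).add hol
  have hF : DifferentiableOn ℂ (fun z : ℂ => (1 - S z)⁻¹ * (1 + S z)) (ball (0 : ℂ) 1) :=
    fun x hx => dwa_matmul (hGinv x hx) (h1S x hx)
  -- Step 3: positive semidefiniteness
  have hPSD : ∀ z ∈ ball (0 : ℂ) 1,
      (((1 - S z)⁻¹ * (1 + S z)) + ((1 - S z)⁻¹ * (1 + S z))ᴴ).PosSemidef := by
    intro z hz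
    set T : Matrix (Fin N) (Fin N) ℂ := S z with hT
    have hu : IsUnit (1 - T) := hunit z hz
    have hud : IsUnit (1 - T).det := (Matrix.isUnit_iff_isUnit_det _).1 hu
    have hctm : ((1 : Matrix (Fin N) (Fin N) ℂ) - T)ᴴ = 1 - Tᴴ := by simp
    have huH : IsUnit ((1 : Matrix (Fin N) (Fin N) ℂ) - Tᴴ) := by
      rw [← hctm]; exact (Matrix.isUnit_conjTranspose _).2 hu
    have hudH : IsUnit ((1 : Matrix (Fin N) (Fin N) ℂ) - Tᴴ).det :=
      (Matrix.isUnit_iff_isUnit_det _).1 huH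
    have hE : ((1 : Matrix (Fin N) (Fin N) ℂ) - Tᴴ * T).PosSemidef := hcontr z hz
    have hct : ((1 - T)⁻¹)ᴴ = ((1 : Matrix (Fin N) (Fin N) ℂ) - Tᴴ)⁻¹ := by
      rw [Matrix.conjTranspose_nonsing_inv, hctm]
    have key : ((1 - T)⁻¹ * (1 + T)) + ((1 - T)⁻¹ * (1 + T))ᴴ
        = ((1 - T)⁻¹)ᴴ * (((1 : Matrix (Fin N) (Fin N) ℂ) - Tᴴ * T)
            + (1 - Tᴴ * T)) * (1 - T)⁻¹ := by
      have e1 : ((1 : Matrix (Fin N) (Fin N) ℂ) - Tᴴ * T) + (1 - Tᴴ * T)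
          = (1 - Tᴴ) * (1 + T) + (1 + Tᴴ) * (1 - T) := by noncomm_ring
      have expand : ((1 : Matrix (Fin N) (Fin N) ℂ) - Tᴴ)⁻¹
            * ((1 - Tᴴ) * (1 + T) + (1 + Tᴴ) * (1 - T)) * (1 - T)⁻¹
          = (1 - Tᴴ)⁻¹ * (1 - Tᴴ) * ((1 + T) * (1 - T)⁻¹)
            + (1 - Tᴴ)⁻¹ * (1 + Tᴴ) * ((1 - T) * (1 - T)⁻¹) := by noncomm_ring
      rw [hct, e1, expand, Matrix.nonsing_inv_mul _ hudH, Matrix.mul_nonsing_inv _ hud,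
        one_mul, mul_one]
      have hcv : (1 + T) * (1 - T)⁻¹ = (1 - T)⁻¹ * (1 + T) := (comm_inv hu).symm
      have hLH : ((1 - T)⁻¹ * (1 + T))ᴴ = (1 - Tᴴ)⁻¹ * (1 + Tᴴ) := by
        rw [Matrix.conjTranspose_mul, hct]
        have : ((1 : Matrix (Fin N) (Fin N) ℂ) + T)ᴴ = 1 + Tᴴ := by simp
        rw [this]
        exact (comm_inv huH).symm
      rw [hcv, hLH]
    rw [key]
    exact (hE.add hE).conjTranspose_mul_mul_same _
  refine ⟨hunit, hF, hPSD, ?_, ?_⟩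
  -- Step 4: F(0) = 1
  · rw [h0]; simp
  -- Step 5: F'(0) = 0
  · have h0mem : (0 : ℂ) ∈ ball (0 : ℂ) 1 := by simp
    have hGat : DifferentiableAt ℂ (fun z => ((1 : Matrix (Fin N) (Fin N) ℂ) - S z)⁻¹) 0 :=
      (hGinv 0 h0mem).differentiableAt (isOpen_ball.mem_nhds h0mem)
    have hd := hGat.hasDerivAt
    have hprod := hasDerivAt_matmul hd hder
    rw [h0, mul_zero, mul_zero, add_zero] at hprod
    have h2 : HasDerivAt
        (fun z : ℂ => (1 : Matrix (Fin N) (Fin N) ℂ)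
          + ((1 - S z)⁻¹ * S z + (1 - S z)⁻¹ * S z))
        (0 : Matrix (Fin N) (Fin N) ℂ) 0 := by
      have := (hasDerivAt_const (0 : ℂ)
        (1 : Matrix (Fin N) (Fin N) ℂ)).fun_add (hprod.fun_add hprod)
      simp only [add_zero] at this
      exact this
    apply h2.congr_of_eventuallyEq
    filter_upwards [isOpen_ball.mem_nhds h0mem] with w hw
    have hud := (Matrix.isUnit_iff_isUnit_det _).1 (hunit w hw)
    have hsplit : (1 : Matrix (Fin N) (Fin N) ℂ) + S w = (1 - S w) + (S w + S w) := by abel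
    rw [hsplit, Matrix.mul_add, Matrix.nonsing_inv_mul _ hud, Matrix.mul_add]
end

section
/- Let N ≥ 1 and let F : 𝔻 → M_N(ℂ) be holomorphic on 𝔻 with F(z) + F(z)ᴴ positive semidefinite for every z ∈ 𝔻, F(0) = I_N, and derivative of F at 0 equal to 0. Then for every z ∈ 𝔻 the matrix F(z) + I_N is invertible, and the function S(z) := (F(z) + I_N)⁻¹·(F(z) − I_N) is holomorphic on 𝔻 and satisfies: I_N − S(z)ᴴ·S(z) is positive semidefinite for all z ∈ 𝔻, S(0) = 0, and the derivative of S at 0 is 0. -/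
open Metric Matrix Finset
open scoped ComplexOrder

attribute [local instance] Matrix.normedAddCommGroup Matrix.normedSpace

private lemma prodDiffOn {ι : Type*} {s : Set ℂ} (u : Finset ι) (f : ι → ℂ → ℂ)
    (h : ∀ i ∈ u, DifferentiableOn ℂ (f i) s) :
    DifferentiableOn ℂ (fun z => ∏ i ∈ u, f i z) s := by
  classical
  induction u using Finset.cons_induction with
  | empty => simpa using differentiableOn_const 1
  | cons a u ha ih =>
    simp only [Finset.prod_cons]
    exact (h a (Finset.mem_cons_self a u)).mul
      (ih fun i hi => h i (Finset.mem_cons_of_mem hi))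

private lemma detDiffOn {n : ℕ} {s : Set ℂ} {M : ℂ → Matrix (Fin n) (Fin n) ℂ}
    (h : ∀ i j, DifferentiableOn ℂ (fun z => M z i j) s) :
    DifferentiableOn ℂ (fun z => (M z).det) s := by
  simp only [Matrix.det_apply']
  exact DifferentiableOn.fun_sum fun σ _ =>
    ((prodDiffOn _ _ fun i _ => h (σ i) i).const_mul _)

private lemma unitAux {n : ℕ} {M : Matrix (Fin n) (Fin n) ℂ}
    (h : (M + Mᴴ).PosSemidef) : IsUnit (M + 1) := by
  rw [Matrix.isUnit_iff_isUnit_det, isUnit_iff_ne_zero]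
  intro hdet
  obtain ⟨v, hv, hMv⟩ := (Matrix.exists_mulVec_eq_zero_iff).2 hdet
  have hFv : M *ᵥ v = -v := by
    have := hMv
    rw [Matrix.add_mulVec, Matrix.one_mulVec] at this
    linear_combination (norm := module) this
  have h2 := h.dotProduct_mulVec_nonneg v
  rw [Matrix.add_mulVec, dotProduct_add, hFv] at h2
  have hsecond : star v ⬝ᵥ (Mᴴ *ᵥ v) = -(star v ⬝ᵥ v) := by
    rw [Matrix.dotProduct_mulVec, ← Matrix.star_mulVec, hFv]
    simp [dotProduct, mul_comm]
  rw [hsecond] at h2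
  simp only [dotProduct_neg] at h2
  have hnn : 0 ≤ star v ⬝ᵥ v := dotProduct_star_self_nonneg v
  rw [← neg_add, neg_nonneg] at h2
  have h4 : (star v ⬝ᵥ v) + (star v ⬝ᵥ v) = 0 := le_antisymm h2 (add_nonneg hnn hnn)
  exact hv (dotProduct_star_self_eq_zero.mp (add_self_eq_zero.mp h4))

/-- The Cayley transform `S = (F + I)⁻¹ (F - I)` of a normalized constrained matrix
Herglotz function `F` on the unit disk (holomorphic with `F(z) + F(z)ᴴ ⪰ 0`, `F(0) = I`,
`F'(0) = 0`) is a matrix Schur-class function with `S(0) = 0` and `S'(0) = 0`. -/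
theorem stmt18 (N : ℕ) (hN : 1 ≤ N) (F : ℂ → Matrix (Fin N) (Fin N) ℂ)
    (hol : DifferentiableOn ℂ F (ball (0 : ℂ) 1))
    (hre : ∀ z ∈ ball (0 : ℂ) 1, (F z + (F z)ᴴ).PosSemidef)
    (h0 : F 0 = 1) (hder : HasDerivAt F (0 : Matrix (Fin N) (Fin N) ℂ) 0) :
    (∀ z ∈ ball (0 : ℂ) 1, IsUnit (F z + (1 : Matrix (Fin N) (Fin N) ℂ))) ∧
    DifferentiableOn ℂ (fun z : ℂ => (F z + 1)⁻¹ * (F z - 1)) (ball (0 : ℂ) 1) ∧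
    (∀ z ∈ ball (0 : ℂ) 1,
      ((1 : Matrix (Fin N) (Fin N) ℂ) -
        ((F z + 1)⁻¹ * (F z - 1))ᴴ * ((F z + 1)⁻¹ * (F z - 1))).PosSemidef) ∧
    (F 0 + 1)⁻¹ * (F 0 - 1) = (0 : Matrix (Fin N) (Fin N) ℂ) ∧
    HasDerivAt (fun z : ℂ => (F z + 1)⁻¹ * (F z - 1))
      (0 : Matrix (Fin N) (Fin N) ℂ) 0 := by
  classical
  have hunit : ∀ z ∈ ball (0 : ℂ) 1, IsUnit (F z + (1 : Matrix (Fin N) (Fin N) ℂ)) :=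
    fun z hz => unitAux (hre z hz)
  have h0ball : (0 : ℂ) ∈ ball (0 : ℂ) 1 := mem_ball_self one_pos
  -- entrywise differentiability of F
  have hFentry : ∀ i j, DifferentiableOn ℂ (fun z => F z i j) (ball (0 : ℂ) 1) := by
    intro i j z hz
    exact (differentiableWithinAt_pi.mp ((differentiableWithinAt_pi.mp (hol z hz)) i)) j
  -- determinant function
  set d : ℂ → ℂ := fun z => (F z + 1).det with hd_def
  have hdDiff : DifferentiableOn ℂ d (ball (0 : ℂ) 1) :=
    detDiffOn fun i j => by
      simpa using (hFentry i j).add_const ((1 : Matrix (Fin N) (Fin N) ℂ) i j)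
  have hdne : ∀ z ∈ ball (0 : ℂ) 1, d z ≠ 0 := by
    intro z hz
    have := (Matrix.isUnit_iff_isUnit_det _).mp (hunit z hz)
    exact IsUnit.ne_zero (by simpa using this)
  -- adjugate entries differentiable
  have hadjDiff : ∀ i j, DifferentiableOn ℂ (fun z => (F z + 1).adjugate i j)
      (ball (0 : ℂ) 1) := by
    intro i j
    simp only [Matrix.adjugate_apply]
    apply detDiffOn
    intro a b
    rcases eq_or_ne a j with rfl | hij
    · simp only [Matrix.updateRow_self]
      exact differentiableOn_const _
    · simp only [Matrix.updateRow_ne hij]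
      simpa using (hFentry a b).add_const ((1 : Matrix (Fin N) (Fin N) ℂ) a b)
  -- the entrywise formula for S entries
  have hSentry : ∀ z i j, ((F z + 1)⁻¹ * (F z - 1)) i j
      = (d z)⁻¹ * ∑ k, (F z + 1).adjugate i k * (F z - 1) k j := by
    intro z i j
    rw [Matrix.inv_def]
    simp [Matrix.mul_apply, Matrix.smul_apply, Ring.inverse_eq_inv', smul_eq_mul,
      Finset.mul_sum, mul_assoc, d]
  -- differentiability of S
  have hSdiff : DifferentiableOn ℂ (fun z : ℂ => (F z + 1)⁻¹ * (F z - 1))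
      (ball (0 : ℂ) 1) := by
    intro z hz
    apply differentiableWithinAt_pi.2
    intro i
    apply differentiableWithinAt_pi.2
    intro j
    have : DifferentiableWithinAt ℂ
        (fun z => (d z)⁻¹ * ∑ k, (F z + 1).adjugate i k * (F z - 1) k j)
        (ball (0 : ℂ) 1) z := by
      apply DifferentiableWithinAt.mul
      · exact (hdDiff z hz).inv (hdne z hz)
      · apply DifferentiableWithinAt.fun_sum
        intro k _
        exact ((hadjDiff i k) z hz).mul
          (by simpa using ((hFentry k j) z hz).sub_const ((1 : Matrix (Fin N) (Fin N) ℂ) k j))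
    exact this.congr (fun w _ => (hSentry w i j)) (hSentry z i j)
  -- PSD
  have hPSD : ∀ z ∈ ball (0 : ℂ) 1,
      ((1 : Matrix (Fin N) (Fin N) ℂ) -
        ((F z + 1)⁻¹ * (F z - 1))ᴴ * ((F z + 1)⁻¹ * (F z - 1))).PosSemidef := by
    intro z hz
    set A := F z + 1 with hA
    set B := F z - 1 with hB
    have hu : IsUnit A.det := (Matrix.isUnit_iff_isUnit_det _).mp (hunit z hz)
    have hAA : A * A⁻¹ = 1 := Matrix.mul_nonsing_inv A hu
    have hAA' : A⁻¹ * A = 1 := Matrix.nonsing_inv_mul A hu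
    have hcomm : A⁻¹ * B = B * A⁻¹ := by
      have h1 : A * B = B * A := by rw [hA, hB]; noncomm_ring
      calc A⁻¹ * B = A⁻¹ * B * (A * A⁻¹) := by rw [hAA, mul_one]
        _ = A⁻¹ * (B * A) * A⁻¹ := by noncomm_ring
        _ = A⁻¹ * (A * B) * A⁻¹ := by rw [h1]
        _ = (A⁻¹ * A) * B * A⁻¹ := by noncomm_ring
        _ = B * A⁻¹ := by rw [hAA', one_mul]
    have key : 1 - (A⁻¹ * B)ᴴ * (A⁻¹ * B)
        = (A⁻¹)ᴴ * ((F z + (F z)ᴴ) + (F z + (F z)ᴴ)) * A⁻¹ := by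
      have hP : Aᴴ * A - Bᴴ * B = (F z + (F z)ᴴ) + (F z + (F z)ᴴ) := by
        rw [hA, hB]
        simp only [Matrix.conjTranspose_add, Matrix.conjTranspose_sub,
          Matrix.conjTranspose_one]
        noncomm_ring
      have h1 : (A⁻¹)ᴴ * Aᴴ = 1 := by
        rw [← Matrix.conjTranspose_mul, hAA, Matrix.conjTranspose_one]
      calc 1 - (A⁻¹ * B)ᴴ * (A⁻¹ * B)
          = 1 - (B * A⁻¹)ᴴ * (B * A⁻¹) := by rw [hcomm]
        _ = (A⁻¹)ᴴ * Aᴴ * (A * A⁻¹) - (A⁻¹)ᴴ * Bᴴ * (B * A⁻¹) := by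
            rw [h1, hAA, Matrix.conjTranspose_mul]; noncomm_ring
        _ = (A⁻¹)ᴴ * (Aᴴ * A - Bᴴ * B) * A⁻¹ := by noncomm_ring
        _ = (A⁻¹)ᴴ * ((F z + (F z)ᴴ) + (F z + (F z)ᴴ)) * A⁻¹ := by rw [hP]
    rw [key]
    exact ((hre z hz).add (hre z hz)).conjTranspose_mul_mul_same A⁻¹
  -- S 0 = 0
  have hS0 : (F 0 + 1)⁻¹ * (F 0 - 1) = (0 : Matrix (Fin N) (Fin N) ℂ) := by
    rw [h0]; simp
  refine ⟨hunit, hSdiff, hPSD, hS0, ?_⟩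
  -- derivative at 0
  have hFij : ∀ i j, HasDerivAt (fun z => F z i j) 0 0 := by
    intro i j
    have h1 := (hasDerivAt_pi.mp hder) i
    have h2 := (hasDerivAt_pi.mp h1) j
    simpa using h2
  apply hasDerivAt_pi.2
  intro i
  apply hasDerivAt_pi.2
  intro j
  have hBij : ∀ k, HasDerivAt (fun z => (F z - 1) k j) 0 0 := by
    intro k
    simpa [Matrix.sub_apply] using (hFij k j).sub_const ((1 : Matrix (Fin N) (Fin N) ℂ) k j)
  have hB0 : ∀ k, (F 0 - 1) k j = 0 := by intro k; rw [h0]; simp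
  have hadj : ∀ k, DifferentiableAt ℂ (fun z => (F z + 1).adjugate i k) 0 :=
    fun k => ((hadjDiff i k) 0 h0ball).differentiableAt (isOpen_ball.mem_nhds h0ball)
  have hsum : HasDerivAt (fun z => ∑ k, (F z + 1).adjugate i k * (F z - 1) k j)
      (∑ k : Fin N, (deriv (fun z => (F z + 1).adjugate i k) 0 * (F 0 - 1) k j
        + (F 0 + 1).adjugate i k * 0)) 0 :=
    HasDerivAt.fun_sum fun k _ => ((hadj k).hasDerivAt.mul (hBij k))
  have hval : (∑ k : Fin N, (deriv (fun z => (F z + 1).adjugate i k) 0 * (F 0 - 1) k j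
        + (F 0 + 1).adjugate i k * 0)) = 0 := by simp [hB0]
  have he : HasDerivAt (fun z => ∑ k, (F z + 1).adjugate i k * (F z - 1) k j) 0 0 :=
    by rw [hval] at hsum; exact hsum
  have hdAt : HasDerivAt (fun z => (d z)⁻¹) (-(deriv d 0) / (d 0) ^ 2) 0 :=
    ((hdDiff 0 h0ball).differentiableAt (isOpen_ball.mem_nhds h0ball)).hasDerivAt.inv
      (hdne 0 h0ball)
  have hfull' := hdAt.mul he
  have hval2 : (-(deriv d 0) / (d 0) ^ 2
      * ∑ k, (F 0 + 1).adjugate i k * (F 0 - 1) k j + (d 0)⁻¹ * 0) = 0 := by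
    simp [hB0]
  have hfull : HasDerivAt
      (fun z => (d z)⁻¹ * ∑ k, (F z + 1).adjugate i k * (F z - 1) k j) 0 0 :=
    by rw [hval2] at hfull'; exact hfull'
  have heq : (fun x : ℂ => ((F x + 1)⁻¹ * (F x - 1)) i j) =ᶠ[nhds (0:ℂ)]
      (fun z => (d z)⁻¹ * ∑ k, (F z + 1).adjugate i k * (F z - 1) k j) :=
    Filter.eventuallyEq_of_mem (isOpen_ball.mem_nhds h0ball) (fun w _ => hSentry w i j)
  simpa using hfull.congr_of_eventuallyEq heq
end
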